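/- arXiv:2501.11228 — 10 statements merged into one kernel-verified Lean document; each statement's English description precedes it below -/
import Mathlib

section
/- For every integer N ≥ 0, the polynomial x³ − (N+1)x² − Nx − (N+1) has exactly one root in the open interval (N+1, N+2). -/
open Set

theorem StrictMonoOn.existsUnique_mem_Ioo_eq {f : ℝ → ℝ} {a b y : ℝ} (hab : a ≤ b)
    (hcont : ContinuousOn f (Icc a b)) (hmono : StrictMonoOn f (Icc a b))
    (ha : f a < y) (hb : y < f b) : ∃! x ∈ Ioo a b, f x = y := by
  obtain ⟨x, hx, rfl⟩ := intermediate_value_Ioo hab hcont ⟨ha, hb⟩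
  exact ⟨x, ⟨hx, rfl⟩, fun x' ⟨hx', hfx'⟩ =>
    hmono.injOn (Ioo_subset_Icc_self hx') (Ioo_subset_Icc_self hx) hfx'⟩

def goldenCubic (a x : ℝ) : ℝ := x ^ 3 - (a + 1) * x ^ 2 - a * x - (a + 1)

theorem goldenCubic_sub_goldenCubic (a x y : ℝ) :
    goldenCubic a y - goldenCubic a x =
      (y - x) * (x * (x - (a + 1)) + y * (y - (a + 1)) + x * y - a) := by
  unfold goldenCubic; ring

theorem goldenCubic_strictMonoOn {a : ℝ} (ha : -1 ≤ a) :
    StrictMonoOn (goldenCubic a) (Ici (a + 1)) := by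
  intro x (hx : a + 1 ≤ x) y (hy : a + 1 ≤ y) hxy
  have hxy_sq : (a + 1) ^ 2 ≤ x * y := by nlinarith
  -- The first two terms are nonnegative and `x * y - a ≥ (a + 1) ^ 2 - a = a ^ 2 + a + 1 > 0`.
  have hfactor : 0 < x * (x - (a + 1)) + y * (y - (a + 1)) + x * y - a := by
    nlinarith [mul_nonneg (by linarith : (0 : ℝ) ≤ x) (sub_nonneg.2 hx),
      mul_nonneg (by linarith : (0 : ℝ) ≤ y) (sub_nonneg.2 hy), sq_nonneg (a + 1 / 2)]
  have := goldenCubic_sub_goldenCubic a x y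
  nlinarith [mul_pos (sub_pos.2 hxy) hfactor]

theorem goldenCubic_self_add_one (a : ℝ) : goldenCubic a (a + 1) = -(a + 1) ^ 2 := by
  unfold goldenCubic; ring

theorem goldenCubic_self_add_two (a : ℝ) : goldenCubic a (a + 2) = a + 3 := by
  unfold goldenCubic; ring

theorem existsUnique_goldenCubic_eq_zero {a : ℝ} (ha : -1 < a) :
    ∃! x ∈ Ioo (a + 1) (a + 2), goldenCubic a x = 0 := by
  refine StrictMonoOn.existsUnique_mem_Ioo_eq (by linarith)
    (by unfold goldenCubic; fun_prop)
    ((goldenCubic_strictMonoOn ha.le).mono Icc_subset_Ici_self) ?_ ?_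
  · rw [goldenCubic_self_add_one]; nlinarith
  · rw [goldenCubic_self_add_two]; linarith

/-- x³ − (N+1)x² − Nx − (N+1) has exactly one root in (N+1, N+2). -/
theorem unique_root_golden_3N1 (N : ℕ) :
    ∃! x : ℝ, x ∈ Set.Ioo ((N : ℝ) + 1) ((N : ℝ) + 2) ∧
      x ^ 3 - ((N : ℝ) + 1) * x ^ 2 - (N : ℝ) * x - ((N : ℝ) + 1) = 0 :=
  existsUnique_goldenCubic_eq_zero (neg_one_lt_zero.trans_le N.cast_nonneg)
end

section
/- Let (τ_i) be the Thue–Morse sequence. For every n ≥ 0 and every 0 ≤ j < 2^{n+1}, the shifted word τ_{j+1}⋯τ_{2^{n+1}} satisfies (1−τ₁)(1−τ₂)⋯(1−τ_{2^{n+1}−j}) ≺ τ_{j+1}⋯τ_{2^{n+1}} ≼ τ₁τ₂⋯τ_{2^{n+1}−j} in the lexicographic order. -/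
/-!
Compare the shift `i ↦ τ (x + i)` of the Thue–Morse sequence with `τ` on `1, 2, …`. At the
first position `p` where the shift switches from agreeing with `τ` to disagreeing, or the other
way round, `τ p = 1`: halving `x` and `p` produces the same configuration for `⌊x / 2⌋`, and an
odd `p ≥ 3` cannot occur. At the first difference of the shifted word from the prefix (resp. from
the complemented prefix) this forces the inequalities. The left one is strict because
`τ (j + p) = τ p` for some `p ≤ 2 ^ (n + 1) - j`, which follows from `τ (2 ^ m) = 1` by binary
recursion on `j`.
-/

theorem List.lex_ofFn_or_eq {α : Type*} {r : α → α → Prop} {L : ℕ} (f g : Fin L → α)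
    (hfirst : ∀ k, (∀ i < k, f i = g i) → f k ≠ g k → r (f k) (g k)) :
    List.Lex r (List.ofFn f) (List.ofFn g) ∨ List.ofFn f = List.ofFn g := by
  induction L with
  | zero => exact Or.inr (by simp)
  | succ L ih =>
    rw [List.ofFn_succ, List.ofFn_succ]
    by_cases h0 : f 0 = g 0
    · rw [h0]
      refine (ih _ _ fun k hbefore hk => hfirst k.succ (fun i hi => ?_) hk).imp
        List.Lex.cons (congrArg _)
      cases i using Fin.cases with
      | zero => exact h0
      | succ i => exact hbefore i (Fin.succ_lt_succ_iff.1 hi)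
    · exact Or.inl (List.Lex.rel (hfirst 0 (fun i hi => absurd hi (Fin.not_lt_zero i)) h0))

structure IsThueMorse (τ : ℕ → ℕ) : Prop where
  zero : τ 0 = 0
  double : ∀ i, τ (2 * i) = τ i
  double_add_one : ∀ i, τ (2 * i + 1) = 1 - τ i

namespace IsThueMorse

variable {τ : ℕ → ℕ}

theorem le_one (h : IsThueMorse τ) (i : ℕ) : τ i ≤ 1 := by
  induction i using Nat.evenOddRec with
  | h0 => simp [h.zero]
  | h_even i ih => rwa [h.double]
  | h_odd i _ => rw [h.double_add_one]; omega

theorem one (h : IsThueMorse τ) : τ 1 = 1 := by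
  simpa [h.zero] using h.double_add_one 0

theorem two_pow (h : IsThueMorse τ) (m : ℕ) : τ (2 ^ m) = 1 := by
  induction m with
  | zero => exact h.one
  | succ m ih => rw [pow_succ', h.double, ih]

theorem two (h : IsThueMorse τ) : τ 2 = 1 :=
  (h.double 1).trans h.one

theorem double_add_one_add_two (h : IsThueMorse τ) (a : ℕ) :
    τ (2 * a + 1 + 2) = 1 - τ (2 * a + 1 + 1) := by
  rw [show 2 * a + 1 + 2 = 2 * (a + 1) + 1 by ring, show 2 * a + 1 + 1 = 2 * (a + 1) by ring,
    h.double_add_one, h.double]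

theorem agree_double_iff (h : IsThueMorse τ) (a q : ℕ) :
    τ (2 * a + 2 * q) = τ (2 * q) ↔ τ (a + q) = τ q := by
  rw [← mul_add, h.double, h.double]

theorem agree_double_add_one_iff (h : IsThueMorse τ) (a q : ℕ) :
    τ (2 * a + (2 * q + 1)) = τ (2 * q + 1) ↔ τ (a + q) = τ q := by
  rw [← add_assoc, ← mul_add, h.double_add_one, h.double_add_one]
  have := h.le_one (a + q)
  have := h.le_one q
  omega

theorem agree_double_add_one_double_iff (h : IsThueMorse τ) (a q : ℕ) :
    τ (2 * a + 1 + 2 * q) = τ (2 * q) ↔ τ (a + q) ≠ τ q := by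
  rw [add_right_comm, ← mul_add, h.double_add_one, h.double]
  have := h.le_one (a + q)
  have := h.le_one q
  omega

theorem eq_one_of_agree_switch (h : IsThueMorse τ) (x : ℕ) {p : ℕ} (b : Prop) (hp : 0 < p)
    (hbefore : ∀ q, 0 < q → q < p → (τ (x + q) = τ q ↔ b))
    (hat : τ (x + p) = τ p ↔ ¬b) : τ p = 1 := by
  induction x using Nat.strong_induction_on generalizing p b with
  | _ x ih =>
  rcases Nat.lt_or_ge p 2 with hp1 | hp2
  · obtain rfl : p = 1 := by omega
    exact h.one
  rcases Nat.eq_zero_or_pos x with rfl | hx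
  · have := hbefore 1 one_pos hp2
    simp only [zero_add] at this hat
    tauto
  obtain ⟨a, rfl | rfl⟩ := Nat.even_or_odd' x <;> obtain ⟨s, rfl | rfl⟩ := Nat.even_or_odd' p
  · rw [h.agree_double_iff] at hat
    rw [h.double, ih a (by omega) b (by omega) (fun q hq hqs => ?_) hat]
    rw [← h.agree_double_add_one_iff]
    exact hbefore (2 * q + 1) (by omega) (by omega)
  · have hlast := hbefore (2 * s) (by omega) (by omega)
    rw [h.agree_double_iff] at hlast
    rw [h.agree_double_add_one_iff] at hat
    tauto
  · have hat' : τ (a + s) = τ s ↔ ¬¬b := by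
      rw [h.agree_double_add_one_double_iff] at hat
      tauto
    rw [h.double, ih a (by omega) (¬b) (by omega) (fun q hq hqs => ?_) hat']
    have hq := hbefore (2 * q) (by omega) (by omega)
    rw [h.agree_double_add_one_double_iff] at hq
    exact (not_iff_comm.1 hq).symm
  · have h1 := hbefore 1 one_pos (by omega)
    have h2 := hbefore 2 two_pos (by omega)
    rw [h.one] at h1
    rw [h.double_add_one_add_two, h.two] at h2
    have := h.le_one (2 * a + 1 + 1)
    by_cases hb : b <;> simp only [hb, iff_true, iff_false] at h1 h2 <;> omega

theorem exists_shift_agree_of_lt_two_pow (h : IsThueMorse τ) {m j : ℕ} (hj : j < 2 ^ m) :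
    ∃ p, 0 < p ∧ j + p ≤ 2 ^ m ∧ τ (j + p) = τ p := by
  induction m generalizing j with
  | zero =>
    obtain rfl : j = 0 := by omega
    exact ⟨1, one_pos, by simp, by simp⟩
  | succ m ih =>
    rw [pow_succ'] at hj ⊢
    obtain ⟨a, rfl | rfl⟩ := Nat.even_or_odd' j
    · obtain ⟨p, hp, hpa, hagree⟩ := ih (j := a) (by omega)
      exact ⟨2 * p, by omega, by omega, by rw [← mul_add, h.double, h.double, hagree]⟩
    by_cases h1 : τ (2 * a + 1 + 1) = 1
    · exact ⟨1, one_pos, hj, h1.trans h.one.symm⟩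
    · have hlt : 2 * a + 1 + 1 ≠ 2 * 2 ^ m := fun e => h1 (by rw [e, ← pow_succ', h.two_pow])
      have := h.le_one (2 * a + 1 + 1)
      exact ⟨2, two_pos, by omega, by rw [h.double_add_one_add_two, h.two]; omega⟩

theorem shift_lt_of_first_ne (h : IsThueMorse τ) (x k : ℕ)
    (hbefore : ∀ i < k, τ (x + i + 1) = τ (i + 1)) (hk : τ (x + k + 1) ≠ τ (k + 1)) :
    τ (x + k + 1) < τ (k + 1) := by
  have hone := h.eq_one_of_agree_switch x True (p := k + 1) k.succ_pos (fun q hq hqk => ?_) ?_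
  · have := h.le_one (x + k + 1)
    omega
  · obtain ⟨i, rfl⟩ := Nat.exists_eq_add_one_of_ne_zero hq.ne'
    simpa [← add_assoc] using hbefore i (by omega)
  · simpa [← add_assoc] using hk

theorem compl_lt_shift_of_first_ne (h : IsThueMorse τ) (x k : ℕ)
    (hbefore : ∀ i < k, 1 - τ (i + 1) = τ (x + i + 1)) (hk : 1 - τ (k + 1) ≠ τ (x + k + 1)) :
    1 - τ (k + 1) < τ (x + k + 1) := by
  have hone := h.eq_one_of_agree_switch x False (p := k + 1) k.succ_pos (fun q hq hqk => ?_) ?_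
  · have := h.le_one (x + k + 1)
    omega
  · obtain ⟨i, rfl⟩ := Nat.exists_eq_add_one_of_ne_zero hq.ne'
    have := hbefore i (by omega)
    have := h.le_one (i + 1)
    simp only [← add_assoc, iff_false]
    omega
  · have := h.le_one (k + 1)
    have := h.le_one (x + k + 1)
    simp only [← add_assoc, not_false_eq_true, iff_true]
    omega

end IsThueMorse

/-- lexicographic inequalities for shifts of Thue–Morse prefixes. -/
theorem thueMorse_lex (τ : ℕ → ℕ)
    (hτ0 : τ 0 = 0) (hτe : ∀ i, τ (2 * i) = τ i) (hτo : ∀ i, τ (2 * i + 1) = 1 - τ i)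
    (n j : ℕ) (hj : j < 2 ^ (n + 1)) :
    List.Lex (· < ·)
        (List.ofFn (fun t : Fin (2 ^ (n + 1) - j) => 1 - τ ((t : ℕ) + 1)))
        (List.ofFn (fun t : Fin (2 ^ (n + 1) - j) => τ (j + (t : ℕ) + 1))) ∧
      (List.Lex (· < ·)
          (List.ofFn (fun t : Fin (2 ^ (n + 1) - j) => τ (j + (t : ℕ) + 1)))
          (List.ofFn (fun t : Fin (2 ^ (n + 1) - j) => τ ((t : ℕ) + 1))) ∨
        (List.ofFn (fun t : Fin (2 ^ (n + 1) - j) => τ (j + (t : ℕ) + 1))) =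
          (List.ofFn (fun t : Fin (2 ^ (n + 1) - j) => τ ((t : ℕ) + 1)))) := by
  have h : IsThueMorse τ := ⟨hτ0, hτe, hτo⟩
  refine ⟨(List.lex_ofFn_or_eq _ _ fun k hbefore hk => ?_).resolve_right ?_,
    List.lex_ofFn_or_eq _ _ fun k hbefore hk =>
      h.shift_lt_of_first_ne j k (fun i hi => hbefore ⟨i, by omega⟩ hi) hk⟩
  · exact h.compl_lt_shift_of_first_ne j k (fun i hi => hbefore ⟨i, by omega⟩ hi) hk
  · obtain ⟨p, hp, hpj, hagree⟩ := h.exists_shift_agree_of_lt_two_pow hj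
    obtain ⟨i, rfl⟩ := Nat.exists_eq_add_one_of_ne_zero hp.ne'
    rw [← add_assoc] at hagree
    rw [List.ofFn_inj]
    intro hcompl
    have hi := congrFun hcompl ⟨i, by omega⟩
    dsimp only at hi
    have := h.le_one (i + 1)
    omega
end

section
/- Let N ≥ 0, let (λ_i)_{i≥1} be defined from the Thue–Morse sequence by λ_{3k+1} = τ_{2k+1}+N, λ_{3k+2} = N, λ_{3k+3} = τ_{2k+2}+N, and let (λ̂_i)_{i≥1} be defined by λ̂_{3k+1} = 1−τ_{2k+1}+N, λ̂_{3k+2} = N, λ̂_{3k+3} = 1−τ_{2k+2}+N. Then for every n ≥ 0 and every 0 ≤ i < 3·2ⁿ: λ̂₁⋯λ̂_{3·2ⁿ−i} ≺ λ_{i+1}⋯λ_{3·2ⁿ} ≼ λ₁⋯λ_{3·2ⁿ−i}. -/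
/-!
Up to adding `N`, `λ` is the word `τ₁τ₂τ₃⋯` with a `0` inserted after every second letter, and `λ̂`
is the same word built from the complement `τ̄ = 1 - τ`. For a shift `i = 3m` the inserted letters
line up, and both inequalities become statements about `τ₂ₘ₊₁τ₂ₘ₊₂⋯`. It is at most `τ₁τ₂⋯`
because every suffix of `τ` beginning with `0` is at most `τ`. It lies strictly above `τ̄₁τ̄₂⋯`
within the window because, when `τₘ = 1` and `m < 2ⁿ`, the suffix `τₘτₘ₊₁⋯` stays complementary
to `τ` up to a position `w ≤ 2ⁿ - m` where both words carry a `1`. Both facts follow by induction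
from `τ₂ᵢ = τᵢ` and `τ₂ᵢ₊₁ = 1 - τᵢ`. For `i ≢ 0 (mod 3)` the comparisons are decided within
three letters, because `τ₂ⱼ₊₂τ₂ⱼ₊₃` is `01` or `10` and `τ₁ = τ₂ = 1`.
-/

namespace List

theorem lex_ofFn_of_eq_of_lt {α : Type*} {r : α → α → Prop} {M t : ℕ} {f g : ℕ → α}
    (ht : t < M) (heq : ∀ s < t, f s = g s) (hlt : r (f t) (g t)) :
    Lex r (ofFn fun j : Fin M => f j) (ofFn fun j : Fin M => g j) := by
  induction M generalizing f g t with
  | zero => omega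
  | succ M ih =>
    rw [ofFn_succ, ofFn_succ]
    cases t with
    | zero => exact Lex.rel hlt
    | succ t =>
      rw [Fin.val_zero, heq 0 (by omega)]
      exact .cons (ih (f := fun s => f (s + 1)) (g := fun s => g (s + 1)) (by omega)
        (fun s hs => heq (s + 1) (by omega)) hlt)

theorem lex_ofFn_or_eq_of_forall_le {α : Type*} [LinearOrder α] {M : ℕ} {f g : ℕ → α}
    (h : ∀ t < M, (∀ s < t, f s = g s) → f t ≤ g t) :
    Lex (· < ·) (ofFn fun j : Fin M => f j) (ofFn fun j : Fin M => g j) ∨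
      (ofFn fun j : Fin M => f j) = ofFn fun j : Fin M => g j := by
  by_cases hall : ∀ s < M, f s = g s
  · exact .inr (ofFn_inj.mpr (funext fun j => hall j j.2))
  · push Not at hall
    obtain ⟨htM, hne⟩ := Nat.find_spec hall
    have hbefore : ∀ s < Nat.find hall, f s = g s := fun s hs => by
      by_contra hne'
      exact Nat.find_min hall hs ⟨by omega, hne'⟩
    exact .inl (lex_ofFn_of_eq_of_lt htM hbefore (lt_of_le_of_ne (h _ htM hbefore) hne))

end List

structure IsThueMorse_s7 (τ : ℕ → ℕ) : Prop where
  zero : τ 0 = 0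
  two_mul : ∀ i, τ (2 * i) = τ i
  two_mul_add_one : ∀ i, τ (2 * i + 1) = 1 - τ i

namespace IsThueMorse_s7

variable {τ : ℕ → ℕ}

theorem le_one_s7 (hτ : IsThueMorse_s7 τ) (j : ℕ) : τ j ≤ 1 := by
  induction j using Nat.strong_induction_on with
  | _ j ih =>
    obtain ⟨c, rfl | rfl⟩ := Nat.even_or_odd' j
    · rcases c.eq_zero_or_pos with rfl | hc
      · simp [hτ.zero]
      · rw [hτ.two_mul]; exact ih c (by omega)
    · rw [hτ.two_mul_add_one]; omega

theorem one_sub_one_sub (hτ : IsThueMorse_s7 τ) (j : ℕ) : 1 - (1 - τ j) = τ j := by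
  have := hτ.le_one_s7 j; omega

theorem apply_one (hτ : IsThueMorse_s7 τ) : τ 1 = 1 := by
  simpa [hτ.zero] using hτ.two_mul_add_one 0

theorem apply_two (hτ : IsThueMorse_s7 τ) : τ 2 = 1 := by
  simpa [hτ.apply_one] using hτ.two_mul 1

theorem apply_two_pow (hτ : IsThueMorse_s7 τ) (n : ℕ) : τ (2 ^ n) = 1 := by
  induction n with
  | zero => exact hτ.apply_one
  | succ n ih => rw [pow_succ', hτ.two_mul, ih]

/-- Every suffix of `τ` starting with `0` is lexicographically at most `τ`. -/
theorem apply_add_le_of_agree (hτ : IsThueMorse_s7 τ) (m : ℕ) {u : ℕ} (hu : 0 < u)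
    (hagree : ∀ v < u, τ (m + v) = τ v) : τ (m + u) ≤ τ u := by
  induction m using Nat.strong_induction_on generalizing u with
  | _ m ih =>
    obtain ⟨c, rfl | rfl⟩ := Nat.even_or_odd' m
    · rcases c.eq_zero_or_pos with rfl | hc
      · simp
      obtain ⟨d, rfl | rfl⟩ := Nat.even_or_odd' u
      · have hagree' : ∀ v < d, τ (c + v) = τ v := fun v hv => by
          simpa [← mul_add, hτ.two_mul] using hagree (2 * v) (by omega)
        simpa [← mul_add, hτ.two_mul] using ih c (by omega) (by omega) hagree'
      · have hd : τ (c + d) = τ d := by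
          simpa [← mul_add, hτ.two_mul] using hagree (2 * d) (by omega)
        rw [← add_assoc, ← mul_add, hτ.two_mul_add_one, hτ.two_mul_add_one, hd]
    · -- `τ (2c+2) = τ (c+1)` and `τ (2c+3) = 1 - τ (c+1)` cannot both equal `1`
      have hu : u ≤ 2 := by
        by_contra! hu
        have h1 := hagree 1 (by omega)
        have h2 := hagree 2 (by omega)
        rw [show 2 * c + 1 + 1 = 2 * (c + 1) by ring, hτ.two_mul, hτ.apply_one] at h1
        rw [show 2 * c + 1 + 2 = 2 * (c + 1) + 1 by ring, hτ.two_mul_add_one, h1,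
          hτ.apply_two] at h2
        omega
      have hτu : τ u = 1 := by
        interval_cases u
        exacts [hτ.apply_one, hτ.apply_two]
      rw [hτu]
      exact hτ.le_one_s7 _

theorem apply_two_mul_add_three (hτ : IsThueMorse_s7 τ) (m : ℕ) :
    τ (2 * m + 3) = 1 - τ (2 * m + 2) := by
  rw [show 2 * m + 3 = 2 * (m + 1) + 1 by ring, show 2 * m + 2 = 2 * (m + 1) by ring,
    hτ.two_mul_add_one, hτ.two_mul]

theorem lt_two_pow_of_apply_eq_zero (hτ : IsThueMorse_s7 τ) {n j : ℕ} (hj : j ≤ 2 ^ n)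
    (hτj : τ j = 0) : j < 2 ^ n := by
  refine lt_of_le_of_ne hj fun h => ?_
  rw [h, hτ.apply_two_pow] at hτj
  exact one_ne_zero hτj

theorem exists_agree_compl_of_apply_eq_one (hτ : IsThueMorse_s7 τ) {n m : ℕ} (hm : m < 2 ^ n)
    (hτm : τ m = 1) : ∃ w, 0 < w ∧ m + w ≤ 2 ^ n ∧ (∀ v < w, τ (m + v) = 1 - τ v) ∧
      τ (m + w) = 1 ∧ τ w = 1 := by
  induction n generalizing m with
  | zero =>
    obtain rfl : m = 0 := by simpa using hm
    simp [hτ.zero] at hτm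
  | succ n ih =>
    obtain ⟨c, rfl | rfl⟩ := Nat.even_or_odd' m
    · rw [hτ.two_mul] at hτm
      obtain ⟨w, hw, hwn, hagree, hτcw, hτw⟩ := ih (by rw [pow_succ'] at hm; omega) hτm
      refine ⟨2 * w, by omega, by rw [pow_succ']; omega, fun v hv => ?_, ?_, ?_⟩
      · obtain ⟨k, rfl | rfl⟩ := Nat.even_or_odd' v
        · rw [← mul_add, hτ.two_mul, hτ.two_mul, hagree k (by omega)]
        · rw [← add_assoc, ← mul_add, hτ.two_mul_add_one, hτ.two_mul_add_one,
            hagree k (by omega), hτ.one_sub_one_sub]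
      · rwa [← mul_add, hτ.two_mul]
      · rwa [hτ.two_mul]
    · have hτc : τ c = 0 := by rw [hτ.two_mul_add_one] at hτm; omega
      have hm1 : τ (2 * c + 1 + 1) = τ (c + 1) := by
        rw [show 2 * c + 1 + 1 = 2 * (c + 1) by ring, hτ.two_mul]
      rcases Nat.lt_or_ge (τ (c + 1)) 1 with hc1 | hc1
      · have hcn : c + 1 < 2 ^ n :=
          hτ.lt_two_pow_of_apply_eq_zero (by rw [pow_succ'] at hm; omega) (by omega)
        refine ⟨2, by omega, by rw [pow_succ']; omega, fun v hv => ?_, ?_, hτ.apply_two⟩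
        · interval_cases v
          · simp [hτm, hτ.zero]
          · rw [hm1, hτ.apply_one]; omega
        · rw [show 2 * c + 1 + 2 = 2 * (c + 1) + 1 by ring, hτ.two_mul_add_one]; omega
      · refine ⟨1, by omega, by rw [pow_succ'] at hm ⊢; omega, fun v hv => ?_, ?_, hτ.apply_one⟩
        · obtain rfl : v = 0 := by omega
          simp [hτm, hτ.zero]
        · have := hτ.le_one_s7 (c + 1)
          rw [hm1]; omega

theorem exists_compl_lt_odd_shift (hτ : IsThueMorse_s7 τ) {n m : ℕ} (hm : m < 2 ^ n) :
    ∃ u < 2 * (2 ^ n - m), (∀ v < u, 1 - τ (v + 1) = τ (2 * m + v + 1)) ∧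
      1 - τ (u + 1) < τ (2 * m + u + 1) := by
  rcases Nat.lt_or_ge (τ m) 1 with hτm | hτm
  · refine ⟨0, by omega, fun v hv => absurd hv (Nat.not_lt_zero v), ?_⟩
    rw [hτ.apply_one, add_zero, hτ.two_mul_add_one]
    omega
  obtain ⟨w, hw, hwn, hagree, hτmw, hτw⟩ :=
    hτ.exists_agree_compl_of_apply_eq_one hm (le_antisymm (hτ.le_one_s7 m) hτm)
  refine ⟨2 * w - 1, by omega, fun v hv => ?_, ?_⟩
  · obtain ⟨k, rfl | rfl⟩ := Nat.even_or_odd' v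
    · rw [← mul_add, hτ.two_mul_add_one, hτ.two_mul_add_one, hagree k (by omega),
        hτ.one_sub_one_sub]
    · rw [show 2 * k + 1 + 1 = 2 * (k + 1) by ring,
        show 2 * m + (2 * k + 1) + 1 = 2 * (m + (k + 1)) by ring, hτ.two_mul, hτ.two_mul,
        hagree (k + 1) (by omega)]
  · rw [show 2 * w - 1 + 1 = 2 * w by omega,
      show 2 * m + (2 * w - 1) + 1 = 2 * (m + w) by omega, hτ.two_mul, hτ.two_mul, hτw, hτmw]
    omega

theorem odd_shift_le_of_agree (hτ : IsThueMorse_s7 τ) (m : ℕ) {u : ℕ}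
    (hagree : ∀ v < u, τ (2 * m + v + 1) = τ (v + 1)) : τ (2 * m + u + 1) ≤ τ (u + 1) := by
  rcases Nat.eq_zero_or_pos u with rfl | hu
  · rw [hτ.apply_one]; exact hτ.le_one_s7 _
  -- `τ (2m + 1) = τ 1 = 1` forces `τ (2m) = 0 = τ 0`, so the agreement extends to position `0`
  have h2m : τ (2 * m) = 0 := by
    have := hagree 0 hu
    rw [add_zero, hτ.two_mul_add_one, hτ.apply_one] at this
    rw [hτ.two_mul]; have := hτ.le_one_s7 m; omega
  have := hτ.apply_add_le_of_agree (2 * m) (u := u + 1) (by omega) fun v hv => by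
    rcases v with _ | v
    · rw [add_zero, h2m, hτ.zero]
    · exact hagree v (by omega)
  simpa [add_assoc] using this

end IsThueMorse_s7

/-- `f` is `x` with a letter `0` inserted after every second letter, everything raised by `N`:
`f = (x₀ + N) (x₁ + N) N (x₂ + N) (x₃ + N) N ⋯`. The paper's `λ` satisfies `λₛ₊₁ = f s` for
`x v = τ (v + 1)`, and `λ̂` likewise for `x v = 1 - τ (v + 1)`. -/
structure IsLambda (x : ℕ → ℕ) (N : ℕ) (f : ℕ → ℕ) : Prop where
  three_mul : ∀ k, f (3 * k) = x (2 * k) + N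
  three_mul_add_one : ∀ k, f (3 * k + 1) = N
  three_mul_add_two : ∀ k, f (3 * k + 2) = x (2 * k + 1) + N

namespace IsLambda

variable {x y f g τ : ℕ → ℕ} {N : ℕ}

theorem shift (hf : IsLambda x N f) (m : ℕ) :
    IsLambda (fun v => x (2 * m + v)) N (fun s => f (3 * m + s)) where
  three_mul k := by rw [← mul_add, hf.three_mul, mul_add]
  three_mul_add_one k := by rw [← add_assoc, ← mul_add, hf.three_mul_add_one]
  three_mul_add_two k := by rw [← add_assoc, ← mul_add, hf.three_mul_add_two, mul_add, add_assoc]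

theorem apply_add_half (hf : IsLambda x N f) (v : ℕ) : f (v + (v + 1) / 2) = x v + N := by
  obtain ⟨k, rfl | rfl⟩ := Nat.even_or_odd' v
  · rw [show 2 * k + (2 * k + 1) / 2 = 3 * k by omega, hf.three_mul]
  · rw [show 2 * k + 1 + (2 * k + 1 + 1) / 2 = 3 * k + 2 by omega, hf.three_mul_add_two]

theorem base_eq_of_agree (hf : IsLambda x N f) (hg : IsLambda y N g) {t : ℕ}
    (hagree : ∀ s < t, f s = g s) {v : ℕ} (hv : v + (v + 1) / 2 < t) : x v = y v := by
  have := hagree _ hv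
  rw [hf.apply_add_half, hg.apply_add_half] at this
  omega

theorem eq_of_base_agree (hf : IsLambda x N f) (hg : IsLambda y N g) {u : ℕ}
    (hagree : ∀ v < u, x v = y v) {s : ℕ} (hs : s < u + (u + 1) / 2) : f s = g s := by
  obtain ⟨k, rfl | rfl | rfl⟩ : ∃ k, s = 3 * k ∨ s = 3 * k + 1 ∨ s = 3 * k + 2 := ⟨s / 3, by omega⟩
  · rw [hf.three_mul, hg.three_mul, hagree _ (by omega)]
  · rw [hf.three_mul_add_one, hg.three_mul_add_one]
  · rw [hf.three_mul_add_two, hg.three_mul_add_two, hagree _ (by omega)]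

theorem exists_first_diff_lt (hf : IsLambda x N f) (hg : IsLambda y N g) {M u : ℕ}
    (hu : u < 2 * M) (hagree : ∀ v < u, x v = y v) (hlt : x u < y u) :
    ∃ t < 3 * M, (∀ s < t, f s = g s) ∧ f t < g t := by
  refine ⟨u + (u + 1) / 2, by omega, fun s hs => hf.eq_of_base_agree hg hagree hs, ?_⟩
  rw [hf.apply_add_half, hg.apply_add_half]
  omega

theorem le_of_agree (hf : IsLambda x N f) (hg : IsLambda y N g)
    (hbase : ∀ u, (∀ v < u, x v = y v) → x u ≤ y u) {t : ℕ} (hagree : ∀ s < t, f s = g s) :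
    f t ≤ g t := by
  have hbase' : ∀ u, u + (u + 1) / 2 ≤ t → x u ≤ y u := fun u hu =>
    hbase u fun v hv => hf.base_eq_of_agree hg hagree (by omega)
  obtain ⟨k, rfl | rfl | rfl⟩ : ∃ k, t = 3 * k ∨ t = 3 * k + 1 ∨ t = 3 * k + 2 := ⟨t / 3, by omega⟩
  · rw [hf.three_mul, hg.three_mul]
    exact Nat.add_le_add_right (hbase' _ (by omega)) N
  · rw [hf.three_mul_add_one, hg.three_mul_add_one]
  · rw [hf.three_mul_add_two, hg.three_mul_add_two]
    exact Nat.add_le_add_right (hbase' _ (by omega)) N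

theorem shift_le_of_agree (hτ : IsThueMorse_s7 τ) (hf : IsLambda (fun v => τ (v + 1)) N f) (i : ℕ)
    {t : ℕ} (hagree : ∀ s < t, f (i + s) = f s) : f (i + t) ≤ f t := by
  have f0 : f 0 = 1 + N := by simpa [hτ.apply_one] using hf.three_mul 0
  have f1 : f 1 = N := hf.three_mul_add_one 0
  have f2 : f 2 = 1 + N := by simpa [hτ.apply_two] using hf.three_mul_add_two 0
  obtain ⟨m, rfl | rfl | rfl⟩ : ∃ m, i = 3 * m ∨ i = 3 * m + 1 ∨ i = 3 * m + 2 := ⟨i / 3, by omega⟩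
  · exact (hf.shift m).le_of_agree hf (fun u hu => hτ.odd_shift_le_of_agree m hu) hagree
  · have e0 : f (3 * m + 1 + 0) = N := hf.three_mul_add_one m
    rcases Nat.eq_zero_or_pos t with rfl | ht
    · omega
    · have := hagree 0 ht
      omega
  · have e0 : f (3 * m + 2 + 0) = τ (2 * m + 2) + N := hf.three_mul_add_two m
    have e1 : f (3 * m + 2 + 1) = 1 - τ (2 * m + 2) + N := by
      rw [← hτ.apply_two_mul_add_three]; exact hf.three_mul (m + 1)
    have e2 : f (3 * m + 2 + 2) = N := hf.three_mul_add_one (m + 1)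
    have := hτ.le_one_s7 (2 * m + 2)
    rcases Nat.lt_or_ge t 3 with ht | ht
    · interval_cases t
      · omega
      · have := hagree 0 (by omega); omega
      · omega
    · have := hagree 2 (by omega); omega

theorem exists_first_diff_lt_shift (hτ : IsThueMorse_s7 τ) (hf : IsLambda (fun v => τ (v + 1)) N f)
    (hg : IsLambda (fun v => 1 - τ (v + 1)) N g) {n i : ℕ} (hi : i < 3 * 2 ^ n) :
    ∃ t < 3 * 2 ^ n - i, (∀ s < t, g s = f (i + s)) ∧ g t < f (i + t) := by
  have g0 : g 0 = N := by simpa [hτ.apply_one] using hg.three_mul 0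
  have g1 : g 1 = N := hg.three_mul_add_one 0
  have g2 : g 2 = N := by simpa [hτ.apply_two] using hg.three_mul_add_two 0
  have hwindow : ∀ m < 2 ^ n, τ (2 * m + 2) = 0 → m + 1 < 2 ^ n := fun m hm h =>
    hτ.lt_two_pow_of_apply_eq_zero hm (by rwa [← hτ.two_mul, mul_add, mul_one])
  obtain ⟨m, rfl | rfl | rfl⟩ : ∃ m, i = 3 * m ∨ i = 3 * m + 1 ∨ i = 3 * m + 2 := ⟨i / 3, by omega⟩
  · obtain ⟨u, hu, hagree, hlt⟩ := hτ.exists_compl_lt_odd_shift (n := n) (m := m) (by omega)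
    obtain ⟨t, ht, hagree', hlt'⟩ := hg.exists_first_diff_lt (hf.shift m) hu hagree hlt
    exact ⟨t, by omega, hagree', hlt'⟩
  · have := hτ.le_one_s7 (2 * m + 2)
    have e0 : f (3 * m + 1 + 0) = N := hf.three_mul_add_one m
    have e1 : f (3 * m + 1 + 1) = τ (2 * m + 2) + N := hf.three_mul_add_two m
    have e2 : f (3 * m + 1 + 2) = 1 - τ (2 * m + 2) + N := by
      rw [← hτ.apply_two_mul_add_three]; exact hf.three_mul (m + 1)
    rcases Nat.lt_or_ge (τ (2 * m + 2)) 1 with h | h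
    · have := hwindow m (by omega) (by omega)
      refine ⟨2, by omega, fun s hs => ?_, by omega⟩
      interval_cases s <;> omega
    · refine ⟨1, by omega, fun s hs => ?_, by omega⟩
      interval_cases s; omega
  · have := hτ.le_one_s7 (2 * m + 2)
    have e0 : f (3 * m + 2 + 0) = τ (2 * m + 2) + N := hf.three_mul_add_two m
    have e1 : f (3 * m + 2 + 1) = 1 - τ (2 * m + 2) + N := by
      rw [← hτ.apply_two_mul_add_three]; exact hf.three_mul (m + 1)
    rcases Nat.lt_or_ge (τ (2 * m + 2)) 1 with h | h
    · have := hwindow m (by omega) (by omega)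
      refine ⟨1, by omega, fun s hs => ?_, by omega⟩
      interval_cases s; omega
    · exact ⟨0, by omega, fun s hs => absurd hs (Nat.not_lt_zero s), by omega⟩

end IsLambda

/-- λ̂₁⋯λ̂_{3·2ⁿ−i} ≺ λ_{i+1}⋯λ_{3·2ⁿ} ≼ λ₁⋯λ_{3·2ⁿ−i}. -/
theorem lambda_lex_inequalities (N : ℕ) (τ : ℕ → ℕ)
    (hτ0 : τ 0 = 0) (hτe : ∀ i, τ (2 * i) = τ i) (hτo : ∀ i, τ (2 * i + 1) = 1 - τ i)
    (lam lamh : ℕ → ℕ)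
    (h1 : ∀ k, lam (3 * k + 1) = τ (2 * k + 1) + N)
    (h2 : ∀ k, lam (3 * k + 2) = N)
    (h3 : ∀ k, lam (3 * k + 3) = τ (2 * k + 2) + N)
    (g1 : ∀ k, lamh (3 * k + 1) = 1 - τ (2 * k + 1) + N)
    (g2 : ∀ k, lamh (3 * k + 2) = N)
    (g3 : ∀ k, lamh (3 * k + 3) = 1 - τ (2 * k + 2) + N)
    (n i : ℕ) (hi : i < 3 * 2 ^ n) :
    List.Lex (· < ·)
        (List.ofFn (fun t : Fin (3 * 2 ^ n - i) => lamh ((t : ℕ) + 1)))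
        (List.ofFn (fun t : Fin (3 * 2 ^ n - i) => lam (i + (t : ℕ) + 1))) ∧
      (List.Lex (· < ·)
          (List.ofFn (fun t : Fin (3 * 2 ^ n - i) => lam (i + (t : ℕ) + 1)))
          (List.ofFn (fun t : Fin (3 * 2 ^ n - i) => lam ((t : ℕ) + 1))) ∨
        (List.ofFn (fun t : Fin (3 * 2 ^ n - i) => lam (i + (t : ℕ) + 1))) =
          (List.ofFn (fun t : Fin (3 * 2 ^ n - i) => lam ((t : ℕ) + 1)))) := by
  have hτ : IsThueMorse_s7 τ := ⟨hτ0, hτe, hτo⟩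
  have hlam : IsLambda (fun v => τ (v + 1)) N (fun s => lam (s + 1)) := ⟨h1, h2, h3⟩
  have hlamh : IsLambda (fun v => 1 - τ (v + 1)) N (fun s => lamh (s + 1)) := ⟨g1, g2, g3⟩
  obtain ⟨t, ht, hagree, hlt⟩ := hlam.exists_first_diff_lt_shift hτ hlamh hi
  exact ⟨List.lex_ofFn_of_eq_of_lt ht hagree hlt,
    List.lex_ofFn_or_eq_of_forall_le fun t _ hagree => hlam.shift_le_of_agree hτ i hagree⟩
end

section
/- Let N ≥ 0, let (λ_i) and (λ̂_i) be as defined from the Thue–Morse sequence (λ_{3k+1}=τ_{2k+1}+N, λ_{3k+2}=N, λ_{3k+3}=τ_{2k+2}+N; λ̂ is the same with τ replaced by 1−τ). Then for every n ≥ 0 and every 0 ≤ i < 3·2ⁿ: λ̂₁⋯λ̂_{3·2ⁿ−i} ≼ λ̂_{i+1}⋯λ̂_{3·2ⁿ} ≺ λ₁⋯λ_{3·2ⁿ−i}. -/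
/-!
Write `A n` and `B n` for the first `3·2ⁿ` letters of `λ - N` and `λ̂ - N`. Since
`τ (2ᵐ + k) = 1 - τ k` for `k < 2ᵐ`, the second half of `A (n+1)` is `B n` with its last
letter `0` raised to `1`, and the second half of `B (n+1)` is `A n` with its last letter `1`
lowered to `0`. By induction on `n`, every nonempty suffix `u` of `B n` lies in `[B n, A n)` and
every nonempty suffix of `A n` lies in `(B n, A n]`, the bounds being cut to the length of `u`.
Among words of one length, `w ++ [c]` and `w ++ [c + 1]` are lexicographic neighbours, so
changing the last letter moves a word between these two windows; this handles the suffixes that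
start in the second half. A suffix starting at `i` in the first half is compared on its first
`3·2ⁿ - i` letters by the hypothesis at `i`; on a tie, the next `i` letters are compared by the
hypothesis at `3·2ⁿ - i`.
-/

namespace List

variable {α : Type*} [LinearOrder α]

theorem append_lt_append_of_lt {u v : List α} (s t : List α) (hl : u.length = v.length)
    (h : u < v) : u ++ s < v ++ t := by
  induction h with
  | nil => simp at hl
  | cons _ ih => exact Lex.cons (ih (by simpa using hl))
  | rel h => exact Lex.rel h

theorem append_le_append_of_le {u v s t : List α} (hl : u.length = v.length)
    (h : u ≤ v) (h' : s ≤ t) : u ++ s ≤ v ++ t := by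
  rcases h.lt_or_eq with h | rfl
  · exact (append_lt_append_of_lt s t hl h).le
  · rcases h'.lt_or_eq with h' | rfl
    · exact (append_left_lt h').le
    · exact le_rfl

theorem lt_concat_succ_iff {u v : List ℕ} {c : ℕ} (hv : v.length = u.length + 1) :
    v < u ++ [c + 1] ↔ v ≤ u ++ [c] := by
  induction u generalizing v with
  | nil =>
    obtain ⟨x, rfl⟩ := length_eq_one_iff.mp hv
    simp [le_iff_lt_or_eq, cons_lt_cons_iff]
  | cons a u ih =>
    obtain ⟨x, w, rfl⟩ := exists_cons_of_length_eq_add_one hv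
    rw [cons_append, cons_append, cons_lt_cons_iff, ih (by simpa using hv), le_iff_lt_or_eq,
      le_iff_lt_or_eq, cons_lt_cons_iff, cons.injEq]
    tauto

theorem concat_mem_Ico_iff_concat_succ_mem_Ioc {u v w : List ℕ} {c : ℕ}
    (hv : v.length = u.length + 1) (hw : w.length = u.length + 1) :
    u ++ [c] ∈ Set.Ico v w ↔ u ++ [c + 1] ∈ Set.Ioc v w := by
  rw [Set.mem_Ico, Set.mem_Ioc, lt_concat_succ_iff hv]
  refine and_congr_right fun _ => ?_
  rw [← not_le, ← lt_concat_succ_iff hw, not_lt]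

end List

namespace ThueMorseLex

theorem thueMorse_two_pow_add {τ : ℕ → ℕ} (hτe : ∀ i, τ (2 * i) = τ i)
    (hτo : ∀ i, τ (2 * i + 1) = 1 - τ i) {m k : ℕ} (hk : k < 2 ^ m) :
    τ (2 ^ m + k) = 1 - τ k := by
  induction m generalizing k with
  | zero =>
    obtain rfl : k = 0 := by simpa using hk
    simpa using hτo 0
  | succ m ih =>
    obtain ⟨j, rfl | rfl⟩ := Nat.even_or_odd' k
    · rw [pow_succ, show 2 ^ m * 2 + 2 * j = 2 * (2 ^ m + j) by ring, hτe, hτe, ih (by omega)]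
    · rw [pow_succ, show 2 ^ m * 2 + (2 * j + 1) = 2 * (2 ^ m + j) + 1 by ring, hτo, hτo,
        ih (by omega)]

theorem thueMorse_le_one {τ : ℕ → ℕ} (hτ0 : τ 0 = 0) (hτe : ∀ i, τ (2 * i) = τ i)
    (hτo : ∀ i, τ (2 * i + 1) = 1 - τ i) (i : ℕ) : τ i ≤ 1 := by
  induction i using Nat.strong_induction_on with
  | _ i ih =>
    obtain ⟨k, rfl | rfl⟩ := Nat.even_or_odd' i
    · rcases k.eq_zero_or_pos with rfl | hk
      · simp [hτ0]
      · rw [hτe]; exact ih k (by omega)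
    · rw [hτo]; omega

/-- `lamBit s j` is `λ_{j+1} - N`, with `s` in place of `τ`. -/
def lamBit (s : ℕ → ℕ) (j : ℕ) : ℕ :=
  if j % 3 = 0 then s (2 * (j / 3) + 1) else if j % 3 = 1 then 0 else s (2 * (j / 3) + 2)

def lamWord (s : ℕ → ℕ) (n : ℕ) : List ℕ :=
  (List.range (3 * 2 ^ n)).map (lamBit s)

@[simp]
theorem length_lamWord (s : ℕ → ℕ) (n : ℕ) : (lamWord s n).length = 3 * 2 ^ n := by
  simp [lamWord]

theorem lamBit_three_mul_two_pow_sub_one (s : ℕ → ℕ) (n : ℕ) :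
    lamBit s (3 * 2 ^ n - 1) = s (2 ^ (n + 1)) := by
  have := Nat.one_le_two_pow (n := n)
  rw [lamBit, if_neg (by omega), if_neg (by omega), pow_succ]
  congr 1
  omega

theorem lamBit_three_mul_two_pow_add {s t : ℕ → ℕ} {n j : ℕ}
    (hst : ∀ k < 2 ^ (n + 1), s (2 ^ (n + 1) + k) = t k) (hj : j + 1 < 3 * 2 ^ n) :
    lamBit s (3 * 2 ^ n + j) = lamBit t j := by
  have hmod : (3 * 2 ^ n + j) % 3 = j % 3 := by omega
  have hdiv : (3 * 2 ^ n + j) / 3 = 2 ^ n + j / 3 := by omega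
  rw [pow_succ] at hst
  simp only [lamBit, hmod, hdiv]
  split_ifs
  · rw [← hst _ (by omega)]; congr 1; ring
  · rfl
  · rw [← hst _ (by omega)]; congr 1; ring

theorem lamWord_eq_concat (s : ℕ → ℕ) (n : ℕ) :
    lamWord s n = (List.range (3 * 2 ^ n - 1)).map (lamBit s) ++ [s (2 ^ (n + 1))] := by
  have hL : 3 * 2 ^ n = (3 * 2 ^ n - 1) + 1 := by have := Nat.one_le_two_pow (n := n); omega
  conv_lhs => rw [lamWord, hL, List.range_succ, List.map_append, List.map_singleton,
    lamBit_three_mul_two_pow_sub_one]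

theorem lamWord_succ {s t : ℕ → ℕ} {n : ℕ}
    (hst : ∀ k < 2 ^ (n + 1), s (2 ^ (n + 1) + k) = t k) :
    lamWord s (n + 1) =
      lamWord s n ++ ((List.range (3 * 2 ^ n - 1)).map (lamBit t) ++ [s (2 ^ (n + 2))]) := by
  have := Nat.one_le_two_pow (n := n)
  have hsplit : 3 * 2 ^ (n + 1) = 3 * 2 ^ n + ((3 * 2 ^ n - 1) + 1) := by rw [pow_succ]; omega
  rw [lamWord, hsplit, List.range_add, List.range_succ]
  simp only [List.map_append, List.map_map, List.map_singleton]
  rw [← lamWord]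
  congr 2
  · exact List.map_congr_left fun j hj =>
      lamBit_three_mul_two_pow_add hst (by simp at hj; omega)
  · rw [show 3 * 2 ^ n + (3 * 2 ^ n - 1) = 3 * 2 ^ (n + 1) - 1 by rw [pow_succ]; omega,
      lamBit_three_mul_two_pow_sub_one]

def SuffixBoundsAt (A B : List ℕ) (i : ℕ) : Prop :=
  B.drop i ∈ Set.Ico (B.take (A.length - i)) (A.take (A.length - i)) ∧
    A.drop i ∈ Set.Ioc (B.take (A.length - i)) (A.take (A.length - i))

def SuffixBounds (A B : List ℕ) : Prop :=
  ∀ i < A.length, SuffixBoundsAt A B i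

section Append

variable {A B M P : List ℕ}

theorem suffixBoundsAt_append_length_add (hB : B.length = A.length)
    (hP : P.length = A.length) {j : ℕ}
    (hMj : M.drop j ∈ Set.Ico (B.take (A.length - j)) (A.take (A.length - j)))
    (hPj : P.drop j ∈ Set.Ioc (B.take (A.length - j)) (A.take (A.length - j))) :
    SuffixBoundsAt (A ++ P) (B ++ M) (A.length + j) := by
  have hk : (A ++ P).length - (A.length + j) = A.length - j := by simp [hP]; omega
  rw [SuffixBoundsAt, hk, List.drop_length_add_append, ← hB, List.drop_length_add_append, hB,
    List.take_append_of_le_length (by omega), List.take_append_of_le_length (by omega)]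
  exact ⟨hMj, hPj⟩

theorem suffixBoundsAt_append_of_lt (hB : B.length = A.length) (hP : P.length = A.length)
    {i : ℕ} (hi : i < A.length) (h : SuffixBoundsAt A B i)
    (hBM : B.drop (A.length - i) ++ M.take (A.length - i) ≤ M)
    (hPA : P ≤ A.drop (A.length - i) ++ P.take (A.length - i)) :
    SuffixBoundsAt (A ++ P) (B ++ M) i := by
  set k := A.length - i
  obtain ⟨⟨hB₁, hB₂⟩, hA₁, hA₂⟩ := h
  have htake {X Y : List ℕ} (hX : X.length = A.length) :
      (X ++ Y).take ((A ++ P).length - i) = X.take k ++ (X.drop k ++ Y.take k) := by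
    rw [List.length_append, hP, show A.length + A.length - i = X.length + k by omega,
      List.take_length_add_append, ← List.append_assoc, List.take_append_drop]
  rw [SuffixBoundsAt, htake rfl, htake hB, List.drop_append_of_le_length (by omega),
    List.drop_append_of_le_length (by omega)]
  refine ⟨⟨List.append_le_append_of_le ?_ hB₁ hBM, List.append_lt_append_of_lt _ _ ?_ hB₂⟩,
    List.append_lt_append_of_lt _ _ ?_ hA₁, List.append_le_append_of_le ?_ hA₂ hPA⟩
  all_goals simp [hB]; omega

end Append

theorem SuffixBounds.doubling {l m : List ℕ} (hlm : l.length = m.length)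
    (h : SuffixBounds (l ++ [1]) (m ++ [0])) :
    SuffixBounds (l ++ [1] ++ (m ++ [1])) (m ++ [0] ++ (l ++ [0])) := by
  have hA : (l ++ [1]).length = l.length + 1 := by simp
  have hB : (m ++ [0]).length = (l ++ [1]).length := by simp [hlm]
  have hP : (m ++ [1]).length = (l ++ [1]).length := by simp [hlm]
  intro i hi
  rw [List.length_append, hP] at hi
  rcases lt_or_ge i (l ++ [1]).length with hi' | hi'
  · refine suffixBoundsAt_append_of_lt hB hP hi' (h i hi') ?_ ?_
    all_goals rcases Nat.eq_zero_or_pos i with rfl | hi0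
    · rw [Nat.sub_zero, List.drop_of_length_le hB.le, List.take_of_length_le (by simp),
        List.nil_append]
    · obtain ⟨⟨-, hBk⟩, -⟩ := h ((l ++ [1]).length - i) (by omega)
      rw [Nat.sub_sub_self hi'.le, List.take_append_of_le_length (by omega),
        ← List.take_append_of_le_length (l₂ := [0]) (by omega)] at hBk
      rw [← List.take_append_drop i (l ++ [0])]
      exact (List.append_lt_append_of_lt _ _ (by simp; omega) hBk).le
    · rw [Nat.sub_zero, List.drop_of_length_le le_rfl, List.take_of_length_le hP.le,
        List.nil_append]
    · obtain ⟨-, hAk, -⟩ := h ((l ++ [1]).length - i) (by omega)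
      rw [Nat.sub_sub_self hi'.le, List.take_append_of_le_length (by omega),
        ← List.take_append_of_le_length (l₂ := [1]) (by omega)] at hAk
      rw [← List.take_append_drop i (m ++ [1])]
      exact (List.append_lt_append_of_lt _ _ (by simp; omega) hAk).le
  · obtain ⟨j, rfl⟩ := Nat.exists_eq_add_of_le hi'
    obtain ⟨hBj, hAj⟩ := h j (by omega)
    rw [List.drop_append_of_le_length (by omega)] at hBj hAj
    refine suffixBoundsAt_append_length_add hB hP ?_ ?_
    · rw [List.drop_append_of_le_length (by omega)]
      exact (List.concat_mem_Ico_iff_concat_succ_mem_Ioc (by simp; omega)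
        (by simp; omega)).mpr hAj
    · rw [List.drop_append_of_le_length (by omega)]
      exact (List.concat_mem_Ico_iff_concat_succ_mem_Ioc (by simp; omega)
        (by simp; omega)).mp hBj

theorem suffixBounds_lamWord {τ : ℕ → ℕ} (hτ0 : τ 0 = 0) (hτe : ∀ i, τ (2 * i) = τ i)
    (hτo : ∀ i, τ (2 * i + 1) = 1 - τ i) (n : ℕ) :
    SuffixBounds (lamWord τ n) (lamWord (1 - τ ·) n) := by
  have hpow (m : ℕ) : τ (2 ^ m) = 1 := by
    simpa [hτ0] using thueMorse_two_pow_add hτe hτo (Nat.two_pow_pos m)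
  induction n with
  | zero =>
    have h1 : τ 1 = 1 := by simpa using hpow 0
    have h2 : τ 2 = 1 := by simpa using hpow 1
    have hbase : SuffixBounds [1, 0, 1] [0, 0, 0] := by
      intro i hi
      simp only [List.length_cons, List.length_nil] at hi
      interval_cases i <;> unfold SuffixBoundsAt <;> decide
    convert hbase using 1 <;> simp [lamWord, lamBit, List.range_succ, h1, h2]
  | succ n ih =>
    have hst (k : ℕ) (hk : k < 2 ^ (n + 1)) : τ (2 ^ (n + 1) + k) = 1 - τ k :=
      thueMorse_two_pow_add hτe hτo hk
    have hts (k : ℕ) (hk : k < 2 ^ (n + 1)) : 1 - τ (2 ^ (n + 1) + k) = τ k := by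
      have := thueMorse_le_one hτ0 hτe hτo k
      rw [hst k hk]; omega
    rw [lamWord_eq_concat, lamWord_eq_concat, hpow] at ih
    rw [lamWord_succ hst, lamWord_succ hts, lamWord_eq_concat, lamWord_eq_concat, hpow, hpow]
    exact ih.doubling (by simp)

theorem add_one_eq_lamBit_add {f s : ℕ → ℕ} {N : ℕ} (h1 : ∀ k, f (3 * k + 1) = s (2 * k + 1) + N)
    (h2 : ∀ k, f (3 * k + 2) = N) (h3 : ∀ k, f (3 * k + 3) = s (2 * k + 2) + N) (j : ℕ) :
    f (j + 1) = lamBit s j + N := by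
  rw [lamBit]
  split_ifs
  · rw [show j + 1 = 3 * (j / 3) + 1 by omega, h1]
  · rw [show j + 1 = 3 * (j / 3) + 2 by omega, h2, zero_add]
  · rw [show j + 1 = 3 * (j / 3) + 3 by omega, h3]

theorem ofFn_eq_map_lamWord {f s : ℕ → ℕ} {N : ℕ} (hf : ∀ j, f (j + 1) = lamBit s j + N)
    {n i m : ℕ} (h : i + m ≤ 3 * 2 ^ n) :
    List.ofFn (fun t : Fin m => f (i + t + 1)) = (((lamWord s n).drop i).take m).map (· + N) := by
  apply List.ext_getElem (by simp; omega)
  intro t _ _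
  simp [lamWord, hf]

end ThueMorseLex

open ThueMorseLex in
/-- λ̂₁⋯λ̂_{3·2ⁿ−i} ≼ λ̂_{i+1}⋯λ̂_{3·2ⁿ} ≺ λ₁⋯λ_{3·2ⁿ−i}. -/
theorem lambda_hat_lex_inequalities (N : ℕ) (τ : ℕ → ℕ)
    (hτ0 : τ 0 = 0) (hτe : ∀ i, τ (2 * i) = τ i) (hτo : ∀ i, τ (2 * i + 1) = 1 - τ i)
    (lam lamh : ℕ → ℕ)
    (h1 : ∀ k, lam (3 * k + 1) = τ (2 * k + 1) + N)
    (h2 : ∀ k, lam (3 * k + 2) = N)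
    (h3 : ∀ k, lam (3 * k + 3) = τ (2 * k + 2) + N)
    (g1 : ∀ k, lamh (3 * k + 1) = 1 - τ (2 * k + 1) + N)
    (g2 : ∀ k, lamh (3 * k + 2) = N)
    (g3 : ∀ k, lamh (3 * k + 3) = 1 - τ (2 * k + 2) + N)
    (n i : ℕ) (hi : i < 3 * 2 ^ n) :
    (List.Lex (· < ·)
        (List.ofFn (fun t : Fin (3 * 2 ^ n - i) => lamh ((t : ℕ) + 1)))
        (List.ofFn (fun t : Fin (3 * 2 ^ n - i) => lamh (i + (t : ℕ) + 1))) ∨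
      (List.ofFn (fun t : Fin (3 * 2 ^ n - i) => lamh ((t : ℕ) + 1))) =
        (List.ofFn (fun t : Fin (3 * 2 ^ n - i) => lamh (i + (t : ℕ) + 1)))) ∧
      List.Lex (· < ·)
        (List.ofFn (fun t : Fin (3 * 2 ^ n - i) => lamh (i + (t : ℕ) + 1)))
        (List.ofFn (fun t : Fin (3 * 2 ^ n - i) => lam ((t : ℕ) + 1))) := by
  have hlam := add_one_eq_lamBit_add h1 h2 h3
  have hlamh := add_one_eq_lamBit_add (s := (1 - τ ·)) g1 g2 g3
  obtain ⟨⟨hle, hlt⟩, -⟩ := suffixBounds_lamWord hτ0 hτe hτo n i (by simpa using hi)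
  have hlamhPrefix :=
    ofFn_eq_map_lamWord hlamh (n := n) (i := 0) (m := 3 * 2 ^ n - i) (by omega)
  have hlamhSuffix :=
    ofFn_eq_map_lamWord hlamh (n := n) (i := i) (m := 3 * 2 ^ n - i) (by omega)
  have hlamPrefix := ofFn_eq_map_lamWord hlam (n := n) (i := 0) (m := 3 * 2 ^ n - i) (by omega)
  simp only [zero_add, List.drop_zero] at hlamhPrefix hlamPrefix
  rw [List.take_of_length_le (by simp)] at hlamhSuffix
  simp only [length_lamWord] at hle hlt
  have hmono : ∀ x y : ℕ, x < y → x + N < y + N := fun _ _ h => Nat.add_lt_add_right h N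
  rw [hlamhPrefix, hlamhSuffix, hlamPrefix]
  exact ⟨(le_iff_lt_or_eq.mp hle).imp (List.map_lt hmono) (congrArg _), List.map_lt hmono hlt⟩
end

section
/- Let N ≥ 0 and define (η_i)_{i≥1} by η_{3k+1} = N+2−2τ_k, η_{3k+2} = N+τ_k, η_{3k+3} = N+1+τ_{k+1} for all k ≥ 0, where (τ_i) is the Thue–Morse sequence. Let φ₃ be the substitution 0 ↦ (N+1)(N+2)N, 1 ↦ (N+2)N(N+1). Then (η_i)_{i≥1} equals the shift by one of the concatenation φ₃(τ₀)φ₃(τ₁)φ₃(τ₂)⋯, i.e., for each k ≥ 0 the block (η_{3k+1}, η_{3k+2}, η_{3k+3}) matches the corresponding block of σ(φ₃(τ₀)φ₃(τ₁)⋯). -/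
theorem le_one_of_thueMorse_recursion {τ : ℕ → ℕ} (hτ0 : τ 0 = 0)
    (hτe : ∀ i, τ (2 * i) = τ i) (hτo : ∀ i, τ (2 * i + 1) = 1 - τ i) (n : ℕ) : τ n ≤ 1 := by
  induction n using Nat.strong_induction_on with
  | _ n ih =>
    obtain ⟨m, rfl | rfl⟩ := Nat.even_or_odd' n
    · rcases Nat.eq_zero_or_pos m with rfl | hm
      · simp [hτ0]
      · rw [hτe]
        exact ih m (by omega)
    · rw [hτo]
      omega

theorem substitution_eq_of_le_one {N : ℕ} {φ3 : ℕ → List ℕ}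
    (hφ0 : φ3 0 = [N + 1, N + 2, N]) (hφ1 : φ3 1 = [N + 2, N, N + 1]) {t : ℕ} (ht : t ≤ 1) :
    φ3 t = [N + 1 + t, N + 2 - 2 * t, N + t] := by
  interval_cases t
  · simp [hφ0]
  · simp [hφ1]

/-- (η_i)_{i≥1} is the shift by one of the concatenation φ₃(τ₀)φ₃(τ₁)⋯. -/
theorem eta_eq_shift_substitution (N : ℕ) (τ : ℕ → ℕ)
    (hτ0 : τ 0 = 0) (hτe : ∀ i, τ (2 * i) = τ i) (hτo : ∀ i, τ (2 * i + 1) = 1 - τ i)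
    (η : ℕ → ℕ)
    (h1 : ∀ k, η (3 * k + 1) = N + 2 - 2 * τ k)
    (h2 : ∀ k, η (3 * k + 2) = N + τ k)
    (h3 : ∀ k, η (3 * k + 3) = N + 1 + τ (k + 1))
    (φ3 : ℕ → List ℕ)
    (hφ0 : φ3 0 = [N + 1, N + 2, N]) (hφ1 : φ3 1 = [N + 2, N, N + 1])
    (c : ℕ → ℕ)
    (hc : ∀ k, [c (3 * k), c (3 * k + 1), c (3 * k + 2)] = φ3 (τ k)) :
    ∀ i, 1 ≤ i → η i = c i := by
  have hblock (k : ℕ) :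
      c (3 * k) = N + 1 + τ k ∧ c (3 * k + 1) = N + 2 - 2 * τ k ∧ c (3 * k + 2) = N + τ k := by
    simpa [substitution_eq_of_le_one hφ0 hφ1 (le_one_of_thueMorse_recursion hτ0 hτe hτo k)]
      using hc k
  intro i hi
  obtain ⟨k, rfl | rfl | rfl⟩ : ∃ k, i = 3 * k + 1 ∨ i = 3 * k + 2 ∨ i = 3 * (k + 1) :=
    ⟨(i - 1) / 3, by omega⟩
  · rw [h1, (hblock k).2.1]
  · rw [h2, (hblock k).2.2]
  -- the shift: `η (3k+3)` is the first letter of the next block `φ3 (τ (k+1))`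
  · exact (h3 k).trans (hblock (k + 1)).1.symm
end

section
/- Let N ≥ 0 and define (η_i) from the Thue–Morse sequence by η_{3k+1} = N+2−2τ_k, η_{3k+2} = N+τ_k, η_{3k+3} = N+1+τ_{k+1}, and (η̂_i) by the same formulas with τ replaced by 1−τ (i.e. η̂_{3k+1} = N+2−2(1−τ_k), η̂_{3k+2} = N+(1−τ_k), η̂_{3k+3} = N+1+(1−τ_{k+1})). Then for every n ≥ 0 and every 0 ≤ i < 3·2ⁿ: η̂₁⋯η̂_{3·2ⁿ−i} ≺ η_{i+1}⋯η_{3·2ⁿ} ≼ η₁⋯η_{3·2ⁿ−i}. -/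
/-!
Write `a t = η (t + 1)`, `b t = η̂ (t + 1)` and let `A`, `B` be their blocks of length
`M = 3 · 2ⁿ`. Since `τ (2ⁿ + m) = 1 - τ m` for `m < 2ⁿ`, the block of length `2M` of `a` is `A`
followed by `B` with its last letter `N + 1` raised to `N + 2`, and symmetrically the block of `b`
is `B` followed by `A` with its last letter lowered to `N + 1`. Besides the two claimed comparisons
(prefixes of `B` below suffixes of `A`, suffixes of `A` at most prefixes of `A`) one carries
along prefixes of `B` at most suffixes of `B` and suffixes of `B` below prefixes of `A`. All
four pass from `M` to `2M` by comparing the two halves separately; the modified last letter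
does no harm because `N + 1 ⋖ N + 2`.
-/

namespace List

variable {α : Type*} [LinearOrder α] {p q r s : List α}

theorem append_lt_append_of_lt_s11 (hlen : p.length = q.length) (h : p < q) (r s : List α) :
    p ++ r < q ++ s := by
  induction h with
  | nil => simp at hlen
  | cons _ ih => exact .cons (ih (by simpa using hlen))
  | rel hab => exact .rel hab

theorem append_lt_append_of_le_of_lt (hlen : p.length = q.length) (hpq : p ≤ q) (hrs : r < s) :
    p ++ r < q ++ s := by
  rcases hpq.lt_or_eq with hpq | rfl
  · exact append_lt_append_of_lt_s11 hlen hpq r s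
  · exact append_left_lt hrs

theorem singleton_lt_singleton {c d : α} : [c] < [d] ↔ c < d :=
  lex_singleton_iff c d

theorem concat_lt_concat_iff (hlen : p.length = q.length) {c d : α} :
    p ++ [c] < q ++ [d] ↔ p < q ∨ p = q ∧ c < d := by
  refine ⟨fun h => ?_, ?_⟩
  · rcases lt_trichotomy p q with hpq | rfl | hqp
    · exact .inl hpq
    · refine .inr ⟨rfl, lt_of_not_ge fun hdc => ?_⟩
      rcases hdc.lt_or_eq with hdc | rfl
      · exact lt_asymm h (append_left_lt (singleton_lt_singleton.2 hdc))
      · exact lt_irrefl _ h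
    · exact absurd h (append_lt_append_of_lt_s11 hlen.symm hqp _ _).not_gt
  · rintro (hpq | ⟨rfl, hcd⟩)
    · exact append_lt_append_of_lt_s11 hlen hpq _ _
    · exact append_left_lt (singleton_lt_singleton.2 hcd)

theorem concat_le_concat {c d : α} (h : c ≤ d) : p ++ [c] ≤ p ++ [d] := by
  rcases h.lt_or_eq with h | rfl
  · exact (append_left_lt (singleton_lt_singleton.2 h)).le
  · exact le_rfl

theorem concat_le_of_concat_lt_of_covBy (hlen : p.length = q.length) {x y d : α} (hyx : y ⋖ x)
    (h : p ++ [y] < q ++ [d]) : p ++ [x] ≤ q ++ [d] := by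
  rcases (concat_lt_concat_iff hlen).1 h with hpq | ⟨rfl, hyd⟩
  · exact (append_lt_append_of_lt_s11 hlen hpq _ _).le
  · exact concat_le_concat (hyx.ge_of_gt hyd)

theorem le_concat_of_lt_concat_of_covBy (hlen : q.length = p.length) {x y d : α} (hyx : y ⋖ x)
    (h : q ++ [d] < p ++ [x]) : q ++ [d] ≤ p ++ [y] := by
  rcases (concat_lt_concat_iff hlen).1 h with hqp | ⟨rfl, hdx⟩
  · exact (append_lt_append_of_lt_s11 hlen hqp _ _).le
  · exact concat_le_concat (hyx.le_of_lt hdx)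

end List

section Words

variable {α : Type*}

def word (f : ℕ → α) (i L : ℕ) : List α := List.ofFn fun t : Fin L => f (i + t)

@[simp] theorem length_word (f : ℕ → α) (i L : ℕ) : (word f i L).length = L := by simp [word]

theorem word_add (f : ℕ → α) (i L₁ L₂ : ℕ) :
    word f i (L₁ + L₂) = word f i L₁ ++ word f (i + L₁) L₂ := by
  simp [word, List.ofFn_add, add_assoc]

theorem word_eq_concat (f : ℕ → α) (i : ℕ) {L : ℕ} (hL : 0 < L) :
    word f i L = word f i (L - 1) ++ [f (i + (L - 1))] := by
  conv_lhs => rw [← Nat.sub_add_cancel hL, word_add]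
  simp [word]

theorem word_congr {f g : ℕ → α} {i j L : ℕ} (h : ∀ t < L, f (i + t) = g (j + t)) :
    word f i L = word g j L :=
  congrArg List.ofFn (funext fun t => h t t.2)

/-- The blocks of length `2M` are `a[0,M) b[0,M-1) ?` and `b[0,M) a[0,M-1) ?`; their last
letters are not prescribed here. -/
structure Doubling (a b : ℕ → α) (x y : α) (M : ℕ) : Prop where
  pos : 0 < M
  a_last : a (M - 1) = x
  b_last : b (M - 1) = y
  a_add : ∀ r < M - 1, a (M + r) = b r
  b_add : ∀ r < M - 1, b (M + r) = a r

namespace Doubling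

variable {a b : ℕ → α} {x y : α} {M j L : ℕ} (h : Doubling a b x y M)
include h

theorem word_a_eq_concat (hj : j < M) : word a j (M - j) = word a j (M - j - 1) ++ [x] := by
  rw [word_eq_concat a j (by omega), show j + (M - j - 1) = M - 1 by omega, h.a_last]

theorem word_b_eq_concat (hj : j < M) : word b j (M - j) = word b j (M - j - 1) ++ [y] := by
  rw [word_eq_concat b j (by omega), show j + (M - j - 1) = M - 1 by omega, h.b_last]

theorem word_a_shift (hL : j + L ≤ M - 1) : word a (M + j) L = word b j L :=
  word_congr fun t ht => by rw [add_assoc]; exact h.a_add _ (by omega)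

theorem word_b_shift (hL : j + L ≤ M - 1) : word b (M + j) L = word a j L :=
  word_congr fun t ht => by rw [add_assoc]; exact h.b_add _ (by omega)

theorem word_a_shift_eq_concat (ha₂ : a (2 * M - 1) = x) (hj : j < M) :
    word a (M + j) (M - j) = word b j (M - j - 1) ++ [x] := by
  rw [word_eq_concat a _ (by omega), h.word_a_shift (by omega),
    show M + j + (M - j - 1) = 2 * M - 1 by omega, ha₂]

theorem word_b_shift_eq_concat (hb₂ : b (2 * M - 1) = y) (hj : j < M) :
    word b (M + j) (M - j) = word a j (M - j - 1) ++ [y] := by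
  rw [word_eq_concat b _ (by omega), h.word_b_shift (by omega),
    show M + j + (M - j - 1) = 2 * M - 1 by omega, hb₂]

end Doubling

variable [LinearOrder α]

theorem word_lt_word_of_lt {f g : ℕ → α} {i j L L₁ : ℕ} (hL : L₁ ≤ L)
    (h : word f i L₁ < word g j L₁) : word f i L < word g j L := by
  rw [← Nat.add_sub_cancel' hL, word_add, word_add]
  exact List.append_lt_append_of_lt_s11 (by simp) h _ _

theorem word_lt_word_of_le_of_lt {f g : ℕ → α} {i j L L₁ : ℕ} (hL : L₁ ≤ L)
    (h₁ : word f i L₁ ≤ word g j L₁)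
    (h₂ : word f (i + L₁) (L - L₁) < word g (j + L₁) (L - L₁)) : word f i L < word g j L := by
  rw [← Nat.add_sub_cancel' hL, word_add, word_add]
  exact List.append_lt_append_of_le_of_lt (by simp) h₁ h₂

structure LexInvariant (a b : ℕ → α) (M : ℕ) : Prop where
  a_suffix_le_a_prefix : ∀ i < M, word a i (M - i) ≤ word a 0 (M - i)
  b_prefix_lt_a_suffix : ∀ i < M, word b 0 (M - i) < word a i (M - i)
  b_prefix_le_b_suffix : ∀ i < M, word b 0 (M - i) ≤ word b i (M - i)
  b_suffix_lt_a_prefix : ∀ i < M, word b i (M - i) < word a 0 (M - i)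

namespace LexInvariant

variable {a b : ℕ → α} {w x y : α} {M : ℕ}

section Step

variable (hI : LexInvariant a b M) (h : Doubling a b x y M) (hyx : y ⋖ x)
include hI h hyx

theorem a_suffix_le_a_prefix_two_mul (ha₂ : a (2 * M - 1) = x) :
    ∀ i < 2 * M, word a i (2 * M - i) ≤ word a 0 (2 * M - i) := by
  intro i hi
  rcases lt_or_ge i M with hiM | hMi
  · rcases Nat.eq_zero_or_pos i with rfl | hi₀
    · exact le_rfl
    refine (word_lt_word_of_le_of_lt (L₁ := M - i) (by omega)
      (hI.a_suffix_le_a_prefix i hiM) ?_).le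
    rw [Nat.add_sub_cancel' hiM.le, zero_add, show 2 * M - i - (M - i) = M by omega]
    refine word_lt_word_of_lt (L₁ := i) (by omega) ?_
    rw [show word a M i = word b 0 i from h.word_a_shift (j := 0) (by omega)]
    simpa [Nat.sub_sub_self hiM.le] using hI.b_prefix_lt_a_suffix (M - i) (by omega)
  · obtain ⟨j, rfl⟩ := Nat.exists_eq_add_of_le hMi
    have hj : j < M := by omega
    have hlt := hI.b_suffix_lt_a_prefix j hj
    rw [h.word_b_eq_concat hj, word_eq_concat a 0 (by omega)] at hlt
    rw [show 2 * M - (M + j) = M - j by omega, h.word_a_shift_eq_concat ha₂ hj,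
      word_eq_concat a 0 (by omega)]
    exact List.concat_le_of_concat_lt_of_covBy (by simp) hyx hlt

theorem b_prefix_lt_a_suffix_two_mul (ha₂ : a (2 * M - 1) = x) :
    ∀ i < 2 * M, word b 0 (2 * M - i) < word a i (2 * M - i) := by
  intro i hi
  rcases lt_or_ge i M with hiM | hMi
  · exact word_lt_word_of_lt (by omega) (hI.b_prefix_lt_a_suffix i hiM)
  · obtain ⟨j, rfl⟩ := Nat.exists_eq_add_of_le hMi
    have hj : j < M := by omega
    rw [show 2 * M - (M + j) = M - j by omega, h.word_a_shift_eq_concat ha₂ hj]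
    calc word b 0 (M - j) ≤ word b j (M - j) := hI.b_prefix_le_b_suffix j hj
      _ = word b j (M - j - 1) ++ [y] := h.word_b_eq_concat hj
      _ < word b j (M - j - 1) ++ [x] :=
          List.append_left_lt (List.singleton_lt_singleton.2 hyx.lt)

theorem b_prefix_le_b_suffix_two_mul (hb₂ : b (2 * M - 1) = y) :
    ∀ i < 2 * M, word b 0 (2 * M - i) ≤ word b i (2 * M - i) := by
  intro i hi
  rcases lt_or_ge i M with hiM | hMi
  · rcases Nat.eq_zero_or_pos i with rfl | hi₀
    · exact le_rfl
    refine (word_lt_word_of_le_of_lt (L₁ := M - i) (by omega)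
      (hI.b_prefix_le_b_suffix i hiM) ?_).le
    rw [Nat.add_sub_cancel' hiM.le, zero_add, show 2 * M - i - (M - i) = M by omega]
    refine word_lt_word_of_lt (L₁ := i) (by omega) ?_
    rw [show word b M i = word a 0 i from h.word_b_shift (j := 0) (by omega)]
    simpa [Nat.sub_sub_self hiM.le] using hI.b_suffix_lt_a_prefix (M - i) (by omega)
  · obtain ⟨j, rfl⟩ := Nat.exists_eq_add_of_le hMi
    have hj : j < M := by omega
    have hlt := hI.b_prefix_lt_a_suffix j hj
    rw [h.word_a_eq_concat hj, word_eq_concat b 0 (by omega)] at hlt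
    rw [show 2 * M - (M + j) = M - j by omega, h.word_b_shift_eq_concat hb₂ hj,
      word_eq_concat b 0 (by omega)]
    exact List.le_concat_of_lt_concat_of_covBy (by simp) hyx hlt

theorem b_suffix_lt_a_prefix_two_mul (hb₂ : b (2 * M - 1) = y) :
    ∀ i < 2 * M, word b i (2 * M - i) < word a 0 (2 * M - i) := by
  intro i hi
  rcases lt_or_ge i M with hiM | hMi
  · exact word_lt_word_of_lt (by omega) (hI.b_suffix_lt_a_prefix i hiM)
  · obtain ⟨j, rfl⟩ := Nat.exists_eq_add_of_le hMi
    have hj : j < M := by omega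
    rw [show 2 * M - (M + j) = M - j by omega, h.word_b_shift_eq_concat hb₂ hj]
    calc word a j (M - j - 1) ++ [y] < word a j (M - j - 1) ++ [x] :=
          List.append_left_lt (List.singleton_lt_singleton.2 hyx.lt)
      _ = word a j (M - j) := (h.word_a_eq_concat hj).symm
      _ ≤ word a 0 (M - j) := hI.a_suffix_le_a_prefix j hj

theorem two_mul (ha₂ : a (2 * M - 1) = x) (hb₂ : b (2 * M - 1) = y) :
    LexInvariant a b (2 * M) :=
  ⟨hI.a_suffix_le_a_prefix_two_mul h hyx ha₂, hI.b_prefix_lt_a_suffix_two_mul h hyx ha₂,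
    hI.b_prefix_le_b_suffix_two_mul h hyx hb₂, hI.b_suffix_lt_a_prefix_two_mul h hyx hb₂⟩

end Step

theorem three (hwy : w < y) (hyx : y < x) (ha : a 0 = x ∧ a 1 = w ∧ a 2 = x)
    (hb : b 0 = w ∧ b 1 = y ∧ b 2 = y) : LexInvariant a b 3 := by
  obtain ⟨ha₀, ha₁, ha₂⟩ := ha
  obtain ⟨hb₀, hb₁, hb₂⟩ := hb
  refine ⟨?_, ?_, ?_, ?_⟩ <;> intro i hi <;> interval_cases i <;>
    simp [word, List.ofFn_succ, List.cons_lt_cons_iff, le_iff_lt_or_eq, *, hwy.trans hyx]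

theorem of_doubling {M₀ : ℕ} (hyx : y ⋖ x) (h₀ : LexInvariant a b M₀)
    (hD : ∀ n, Doubling a b x y (M₀ * 2 ^ n)) (n : ℕ) : LexInvariant a b (M₀ * 2 ^ n) := by
  induction n with
  | zero => simpa using h₀
  | succ n ih =>
    have h₂ := hD (n + 1)
    rw [pow_succ, ← mul_assoc, mul_comm _ 2] at h₂ ⊢
    exact ih.two_mul (hD n) hyx h₂.a_last h₂.b_last

end LexInvariant

end Words

section ThueMorse

variable {τ : ℕ → ℕ}

theorem thueMorse_le_one (hτ0 : τ 0 = 0) (hτe : ∀ i, τ (2 * i) = τ i)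
    (hτo : ∀ i, τ (2 * i + 1) = 1 - τ i) (k : ℕ) : τ k ≤ 1 := by
  induction k using Nat.evenOddRec with
  | h0 => simp [hτ0]
  | h_even i ih => rwa [hτe]
  | h_odd i _ => rw [hτo]; omega

theorem thueMorse_two_pow_add (hτe : ∀ i, τ (2 * i) = τ i)
    (hτo : ∀ i, τ (2 * i + 1) = 1 - τ i) {n m : ℕ} (hm : m < 2 ^ n) :
    τ (2 ^ n + m) = 1 - τ m := by
  induction n generalizing m with
  | zero =>
    obtain rfl : m = 0 := by simpa using hm
    exact hτo 0
  | succ n ih =>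
    obtain ⟨q, rfl | rfl⟩ := Nat.even_or_odd' m
    · rw [show 2 ^ (n + 1) + 2 * q = 2 * (2 ^ n + q) by ring, hτe, hτe, ih (by omega)]
    · rw [show 2 ^ (n + 1) + (2 * q + 1) = 2 * (2 ^ n + q) + 1 by ring, hτo, hτo, ih (by omega)]

end ThueMorse

/-- `η` is `IsEtaSeq N τ`, `η̂` is `IsEtaSeq N (1 - τ)`. -/
def IsEtaSeq (N : ℕ) (ρ η : ℕ → ℕ) : Prop :=
  ∀ k, η (3 * k + 1) = N + 2 - 2 * ρ k ∧ η (3 * k + 2) = N + ρ k ∧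
    η (3 * k + 3) = N + 1 + ρ (k + 1)

namespace IsEtaSeq

variable {N : ℕ} {ρ ρ' η η' : ℕ → ℕ}

theorem apply_three_mul (hη : IsEtaSeq N ρ η) {k : ℕ} (hk : 0 < k) :
    η (3 * k) = N + 1 + ρ k := by
  obtain ⟨k, rfl⟩ : ∃ k', k = k' + 1 := ⟨k - 1, by omega⟩
  rw [show 3 * (k + 1) = 3 * k + 3 by ring]
  exact (hη k).2.2

theorem apply_three_mul_two_pow_add (hη : IsEtaSeq N ρ η) (hη' : IsEtaSeq N ρ' η') {n : ℕ}
    (hρ : ∀ m < 2 ^ n, ρ (2 ^ n + m) = ρ' m) :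
    ∀ r < 3 * 2 ^ n - 1, η (3 * 2 ^ n + r + 1) = η' (r + 1) := by
  intro r hr
  obtain ⟨k, c, hc, rfl⟩ : ∃ k c, c < 3 ∧ r = 3 * k + c :=
    ⟨r / 3, r % 3, Nat.mod_lt _ (by norm_num), (Nat.div_add_mod r 3).symm⟩
  obtain ⟨e₁, e₂, e₃⟩ := hη (2 ^ n + k)
  obtain ⟨e₁', e₂', e₃'⟩ := hη' k
  interval_cases c
  · rw [show 3 * 2 ^ n + (3 * k + 0) + 1 = 3 * (2 ^ n + k) + 1 by ring, e₁, hρ k (by omega), e₁']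
  · rw [show 3 * 2 ^ n + (3 * k + 1) + 1 = 3 * (2 ^ n + k) + 2 by ring, e₂, hρ k (by omega), e₂']
  · rw [show 3 * 2 ^ n + (3 * k + 2) + 1 = 3 * (2 ^ n + k) + 3 by ring, e₃,
      show 2 ^ n + k + 1 = 2 ^ n + (k + 1) by ring, hρ (k + 1) (by omega), e₃']

end IsEtaSeq

section Eta

variable {N : ℕ} {τ η ηh : ℕ → ℕ} (hτ0 : τ 0 = 0) (hτe : ∀ i, τ (2 * i) = τ i)
  (hτo : ∀ i, τ (2 * i + 1) = 1 - τ i) (hη : IsEtaSeq N τ η)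
  (hηh : IsEtaSeq N (fun k => 1 - τ k) ηh)
include hτ0 hτe hτo hη hηh

theorem doubling_eta (n : ℕ) :
    Doubling (fun t => η (t + 1)) (fun t => ηh (t + 1)) (N + 2) (N + 1) (3 * 2 ^ n) := by
  have hpos : 0 < 3 * 2 ^ n := by positivity
  have hτ2n : τ (2 ^ n) = 1 := by
    simpa [hτ0] using thueMorse_two_pow_add hτe hτo (Nat.two_pow_pos n)
  refine ⟨hpos, ?_, ?_, ?_, ?_⟩
  · simp only [Nat.sub_add_cancel hpos, hη.apply_three_mul (Nat.two_pow_pos n), hτ2n]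
  · simp only [Nat.sub_add_cancel hpos, hηh.apply_three_mul (Nat.two_pow_pos n), hτ2n]
  · exact hη.apply_three_mul_two_pow_add hηh fun m hm => thueMorse_two_pow_add hτe hτo hm
  · refine hηh.apply_three_mul_two_pow_add hη fun m hm => ?_
    have hτm := thueMorse_le_one hτ0 hτe hτo m
    rw [thueMorse_two_pow_add hτe hτo hm]
    omega

theorem lexInvariant_eta (n : ℕ) :
    LexInvariant (fun t => η (t + 1)) (fun t => ηh (t + 1)) (3 * 2 ^ n) := by
  have hτ1 : τ 1 = 1 := by simpa [hτ0] using hτo 0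
  refine LexInvariant.of_doubling (Order.covBy_add_one _)
    (LexInvariant.three (w := N) (y := N + 1) (x := N + 2) (by omega) (by omega) ?_ ?_)
    (doubling_eta hτ0 hτe hτo hη hηh) n
  · simpa [hτ0, hτ1] using hη 0
  · simpa [hτ0, hτ1] using hηh 0

end Eta

/-- η̂₁⋯η̂_{3·2ⁿ−i} ≺ η_{i+1}⋯η_{3·2ⁿ} ≼ η₁⋯η_{3·2ⁿ−i}. -/
theorem eta_lex_inequalities (N : ℕ) (τ : ℕ → ℕ)
    (hτ0 : τ 0 = 0) (hτe : ∀ i, τ (2 * i) = τ i) (hτo : ∀ i, τ (2 * i + 1) = 1 - τ i)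
    (η ηh : ℕ → ℕ)
    (h1 : ∀ k, η (3 * k + 1) = N + 2 - 2 * τ k)
    (h2 : ∀ k, η (3 * k + 2) = N + τ k)
    (h3 : ∀ k, η (3 * k + 3) = N + 1 + τ (k + 1))
    (g1 : ∀ k, ηh (3 * k + 1) = N + 2 - 2 * (1 - τ k))
    (g2 : ∀ k, ηh (3 * k + 2) = N + (1 - τ k))
    (g3 : ∀ k, ηh (3 * k + 3) = N + 1 + (1 - τ (k + 1)))
    (n i : ℕ) (hi : i < 3 * 2 ^ n) :
    List.Lex (· < ·)
        (List.ofFn (fun t : Fin (3 * 2 ^ n - i) => ηh ((t : ℕ) + 1)))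
        (List.ofFn (fun t : Fin (3 * 2 ^ n - i) => η (i + (t : ℕ) + 1))) ∧
      (List.Lex (· < ·)
          (List.ofFn (fun t : Fin (3 * 2 ^ n - i) => η (i + (t : ℕ) + 1)))
          (List.ofFn (fun t : Fin (3 * 2 ^ n - i) => η ((t : ℕ) + 1))) ∨
        (List.ofFn (fun t : Fin (3 * 2 ^ n - i) => η (i + (t : ℕ) + 1))) =
          (List.ofFn (fun t : Fin (3 * 2 ^ n - i) => η ((t : ℕ) + 1)))) := by
  have hI := lexInvariant_eta hτ0 hτe hτo (fun k => ⟨h1 k, h2 k, h3 k⟩)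
    (fun k => ⟨g1 k, g2 k, g3 k⟩) n
  have hlt := hI.b_prefix_lt_a_suffix i hi
  have hle := hI.a_suffix_le_a_prefix i hi
  simp only [word, zero_add] at hlt hle
  exact ⟨hlt, hle.lt_or_eq⟩
end

section
/- Let t_n be the words defined by t₀ = (N+1)NN and t_{n+1} = t_n⁺ φ₁(t_n⁺) (with φ₁ the blockwise involution swapping (N+1)N(N+1) ↔ NNN and (N+1)NN ↔ NN(N+1), and ⁺ meaning increment of the last letter). Then for each n ≥ 0, the periodic sequence t_n^∞ satisfies σ^i(t_n^∞) ≼ t_n^∞ for all i ≥ 0, where σ is the left shift and ≼ is the lexicographic order on infinite sequences. -/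
/-- Flip a letter between N and N+1. -/
def flipLetter (N x : ℕ) : ℕ := if x = N then N + 1 else N

/-- The blockwise involution φ₁ swapping (N+1)N(N+1) ↔ NNN and (N+1)NN ↔ NN(N+1). -/
def phi1 (N : ℕ) : List ℕ → List ℕ
  | a :: b :: c :: rest => flipLetter N a :: b :: flipLetter N c :: phi1 N rest
  | l => l

/-- Increase the last letter of a word by 1. -/
def plusWord : List ℕ → List ℕ
  | [] => []
  | [a] => [a + 1]
  | a :: b :: rest => a :: plusWord (b :: rest)

/-- The words t_n: t₀ = (N+1)NN, t_{n+1} = t_n⁺ φ₁(t_n⁺). -/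
def tword (N : ℕ) : ℕ → List ℕ
  | 0 => [N + 1, N, N]
  | n + 1 => plusWord (tword N n) ++ phi1 N (plusWord (tword N n))

/-- Lexicographic order ≼ on infinite sequences of naturals. -/
def seqLe (u v : ℕ → ℕ) : Prop :=
  u = v ∨ ∃ n, (∀ m < n, u m = v m) ∧ u n < v n

/-!
Cut `t_n` into blocks of three letters `A = (N+1)N(N+1)`, `B = NN(N+1)`, `C = NNN`,
`D = (N+1)NN`, ordered `C < B < D < A` as words. Then `t_{n+1}` arises from `t_n` by the
2-uniform morphism `A ↦ AB, B ↦ CA, C ↦ CD, D ↦ AC` on blocks. Both this morphism and the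
3-uniform morphism spelling out the blocks are strictly increasing on letters, and such a
morphism is monotone for the lexicographic order and commutes with shifts by multiples of its
length. So, by induction on `n`, maximality among shifts passes through both morphisms at the
aligned shifts. A shift that is not aligned loses against `t_n^∞` at its first or second block,
because `t_n^∞` starts with `A` (or is `D^∞`) and an `A` or `B` is always followed by `B` or `C`,
i.e. `t_n^∞` never has two consecutive letters `N+1`.
-/

lemma seqLe_iff_toLex_le (u v : ℕ → ℕ) : seqLe u v ↔ toLex u ≤ toLex v := by
  rw [le_iff_eq_or_lt]
  rfl

section UniformMorphism

variable {α β : Type*}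

def IsShiftMaximal [PartialOrder α] (x : ℕ → α) : Prop :=
  ∀ a, toLex (fun m => x (a + m)) ≤ toLex x

lemma IsShiftMaximal.comp [PartialOrder α] [PartialOrder β] {x : ℕ → α} {g : α → β}
    (hx : IsShiftMaximal x) (hg : StrictMono g) : IsShiftMaximal (g ∘ x) := by
  intro a
  obtain h | ⟨i, heq, hi⟩ := (hx a).eq_or_lt
  · exact (congrArg (fun y => toLex (g ∘ ofLex y)) h).le
  · exact le_of_lt ⟨i, fun j hj => congrArg g (heq j hj), hg hi⟩

variable {k : ℕ} [NeZero k]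

/-- The image of the sequence `x` under the `k`-uniform morphism `a ↦ f a 0 ⋯ f a (k-1)`. -/
def substSeq (f : α → Fin k → β) (x : ℕ → α) (m : ℕ) : β :=
  f (x (m / k)) (Fin.ofNat k m)

lemma substSeq_mul_add (f : α → Fin k → β) (x : ℕ → α) (i : ℕ) (j : Fin k) :
    substSeq f x (k * i + j) = f (x i) j := by
  have hk : 0 < k := NeZero.pos k
  simp only [substSeq, Fin.ofNat, Nat.mul_add_mod_self_left, Nat.mod_eq_of_lt j.isLt,
    Nat.mul_add_div hk, Nat.div_eq_of_lt j.isLt, add_zero]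

lemma substSeq_shift_mul (f : α → Fin k → β) (x : ℕ → α) (b : ℕ) :
    (fun m => substSeq f x (k * b + m)) = substSeq f (fun i => x (b + i)) := by
  funext m
  have hk : 0 < k := NeZero.pos k
  simp only [substSeq, Fin.ofNat, Nat.mul_add_mod_self_left, Nat.mul_add_div hk]

lemma substSeq_mono [PartialOrder α] [PartialOrder β] {f : α → Fin k → β}
    (hf : StrictMono fun a => toLex (f a)) {x y : ℕ → α} (hxy : toLex x ≤ toLex y) :
    toLex (substSeq f x) ≤ toLex (substSeq f y) := by
  obtain h | ⟨i, heq, hi⟩ := hxy.eq_or_lt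
  · exact (congrArg (fun z => toLex (substSeq f (ofLex z))) h).le
  obtain ⟨p, hpeq, hp⟩ := hf hi
  refine le_of_lt ⟨k * i + p, fun m hm => ?_, by simpa [substSeq_mul_add] using hp⟩
  obtain ⟨q, r, rfl⟩ : ∃ q, ∃ r : Fin k, m = k * q + r :=
    ⟨m / k, Fin.ofNat k m, by simp [Fin.ofNat, Nat.div_add_mod]⟩
  simp only [Pi.toLex_apply, substSeq_mul_add]
  obtain hq | rfl := (show q ≤ i by nlinarith [r.isLt, p.isLt]).lt_or_eq
  · rw [show x q = y q from heq q hq]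
  · exact hpeq r (by simpa using hm)

lemma shift_substSeq_mul_le [PartialOrder α] [PartialOrder β] {f : α → Fin k → β}
    (hf : StrictMono fun a => toLex (f a)) {x : ℕ → α} (hx : IsShiftMaximal x) (b : ℕ) :
    toLex (fun m => substSeq f x (k * b + m)) ≤ toLex (substSeq f x) := by
  rw [substSeq_shift_mul]
  exact substSeq_mono hf (hx b)

end UniformMorphism

section Words

variable {α β : Type*} {k : ℕ}

def substWord (f : α → Fin k → β) (l : List α) : List β :=
  l.flatMap fun a => List.ofFn (f a)

/-- `l^∞`; the default `d` only matters for `l = []`. -/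
def periodicSeq (l : List α) (d : α) (m : ℕ) : α :=
  l.getD (m % l.length) d

lemma substWord_append (f : α → Fin k → β) (l₁ l₂ : List α) :
    substWord f (l₁ ++ l₂) = substWord f l₁ ++ substWord f l₂ :=
  List.flatMap_append

lemma length_substWord (f : α → Fin k → β) (l : List α) :
    (substWord f l).length = k * l.length := by
  simp [substWord, List.length_flatMap, mul_comm]

lemma getD_substWord (f : α → Fin k → β) (l : List α) (d : α) (d' : β) {i : ℕ}
    (hi : i < l.length) (j : Fin k) :
    (substWord f l).getD (k * i + j) d' = f (l.getD i d) j := by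
  induction l generalizing i with
  | nil => simp at hi
  | cons a l ih =>
    simp only [substWord, List.flatMap_cons] at ih ⊢
    cases i with
    | zero =>
      rw [Nat.mul_zero, Nat.zero_add, List.getD_append _ _ _ _ (by simp)]
      simp
    | succ i =>
      rw [List.getD_append_right _ _ _ _ (by simp; nlinarith), List.length_ofFn,
        show k * (i + 1) + j - k = k * i + j by rw [Nat.mul_succ]; omega,
        ih (by simpa using hi)]
      simp

lemma periodicSeq_substWord [NeZero k] (f : α → Fin k → β) {l : List α} (hl : l ≠ []) (d : α)
    (d' : β) :
    periodicSeq (substWord f l) d' = substSeq f (periodicSeq l d) := by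
  funext m
  have hlen : 0 < l.length := List.length_pos_iff.mpr hl
  have hm : m % (k * l.length) = k * (m / k % l.length) + (Fin.ofNat k m : ℕ) := by
    rw [Fin.val_ofNat, ← Nat.mod_mul_right_div_self, ← Nat.mod_mul_right_mod m k l.length,
      Nat.div_add_mod]
  rw [periodicSeq, length_substWord, hm, getD_substWord f l d d' (Nat.mod_lt _ hlen)]
  rfl

lemma substWord_map {f : α → Fin k → β} {g : α → α} {g' : β → β}
    (h : ∀ a, f (g a) = g' ∘ f a) (l : List α) :
    substWord f (l.map g) = (substWord f l).map g' := by
  simp [substWord, List.flatMap_map, List.map_flatMap, h, List.map_ofFn]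

lemma substWord_modifyLast_concat [NeZero k] {f : α → Fin k → β} {g : α → α} {g' : β → β}
    {a : α}
    (h : List.ofFn (f (g a)) = (List.ofFn (f a)).modifyLast g') (l : List α) :
    substWord f ((l ++ [a]).modifyLast g) = (substWord f (l ++ [a])).modifyLast g' := by
  have hne : List.ofFn (f a) ≠ [] := by simp [NeZero.ne k]
  simp only [List.modifyLast_concat, substWord_append]
  rw [List.modifyLast_append_of_right_ne_nil _ _ _ (by simpa [substWord] using hne)]
  simp [substWord, h]

end Words

inductive Block | A | B | C | D
  deriving DecidableEq

instance : Fintype Block := ⟨{.A, .B, .C, .D}, fun x => by cases x <;> decide⟩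

namespace Block

def rank : Block → ℕ
  | C => 0 | B => 1 | D => 2 | A => 3

lemma rank_injective : Function.Injective rank := by
  decide

instance : LinearOrder Block := LinearOrder.lift' rank rank_injective

def bits : Block → Fin 3 → ℕ
  | A => ![1, 0, 1] | B => ![0, 0, 1] | C => ![0, 0, 0] | D => ![1, 0, 0]

lemma bits_one (a : Block) : a.bits 1 = 0 := by
  cases a <;> rfl

def letters (N : ℕ) (a : Block) (i : Fin 3) : ℕ :=
  N + a.bits i

def morph : Block → Fin 2 → Block
  | A => ![A, B] | B => ![C, A] | C => ![C, D] | D => ![A, C]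

/-- `φ₁` on blocks. -/
def phi : Block → Block
  | A => C | B => D | C => A | D => B

/-- `⁺` on blocks ending in `N`. -/
def plus : Block → Block
  | C => B | D => A | a => a

lemma strictMono_bits : StrictMono fun a => toLex (bits a) := by
  intro a b h
  cases a <;> cases b <;> first
    | exact absurd h (by decide)
    | exact ⟨0, by simp only [Pi.toLex_apply]; decide, by decide⟩
    | exact ⟨1, by simp only [Pi.toLex_apply]; decide, by decide⟩
    | exact ⟨2, by simp only [Pi.toLex_apply]; decide, by decide⟩

lemma strictMono_morph : StrictMono fun a => toLex (morph a) := by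
  intro a b h
  cases a <;> cases b <;> first
    | exact absurd h (by decide)
    | exact ⟨0, by simp only [Pi.toLex_apply]; decide, by decide⟩
    | exact ⟨1, by simp only [Pi.toLex_apply]; decide, by decide⟩

end Block

open Block

def blockSeq : ℕ → ℕ → Block
  | 0 => fun _ => D
  | n + 1 => substSeq morph (blockSeq n)

lemma blockSeq_succ_two_mul (n i : ℕ) : blockSeq (n + 1) (2 * i) = morph (blockSeq n i) 0 :=
  substSeq_mul_add _ _ i 0

lemma blockSeq_succ_two_mul_add_one (n i : ℕ) :
    blockSeq (n + 1) (2 * i + 1) = morph (blockSeq n i) 1 :=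
  substSeq_mul_add _ _ i 1

lemma blockSeq_succ_zero (n : ℕ) : blockSeq (n + 1) 0 = A := by
  induction n with
  | zero => rfl
  | succ n ih => exact (blockSeq_succ_two_mul (n + 1) 0).trans (by rw [ih]; rfl)

lemma bits_blockSeq_zero (n : ℕ) : (blockSeq n 0).bits 0 = 1 := by
  cases n with
  | zero => rfl
  | succ n => rw [blockSeq_succ_zero]; rfl

lemma bits_blockSeq_add_one_zero_eq_zero {n k : ℕ} (hk : (blockSeq n k).bits 2 = 1) :
    (blockSeq n (k + 1)).bits 0 = 0 := by
  induction n generalizing k with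
  | zero => simp [blockSeq, bits] at hk
  | succ n ih =>
    obtain ⟨b, rfl | rfl⟩ := Nat.even_or_odd' k
    · have hmorph : ∀ X, (morph X 0).bits 2 = 1 → (morph X 1).bits 0 = 0 := by decide
      rw [blockSeq_succ_two_mul] at hk
      rw [blockSeq_succ_two_mul_add_one]
      exact hmorph _ hk
    · have hend : ∀ X, (morph X 1).bits 2 = 1 → X.bits 2 = 1 := by decide
      have hstart : ∀ Y, Y.bits 0 = 0 → (morph Y 0).bits 0 = 0 := by decide
      rw [blockSeq_succ_two_mul_add_one] at hk
      rw [show 2 * b + 1 + 1 = 2 * (b + 1) by ring, blockSeq_succ_two_mul]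
      exact hstart _ (ih (hend _ hk))

lemma shift_blockSeq_succ_two_mul_add_one_lt (n b : ℕ) :
    toLex (fun m => blockSeq (n + 1) (2 * b + 1 + m)) < toLex (blockSeq (n + 1)) := by
  have hfirst : blockSeq (n + 1) 0 = morph (blockSeq n 0) 0 := blockSeq_succ_two_mul n 0
  by_cases hB : blockSeq n b = B
  · cases n with
    | zero => simp [blockSeq] at hB
    | succ n =>
      have hnext : (blockSeq (n + 1) (b + 1)).bits 0 = 0 :=
        bits_blockSeq_add_one_zero_eq_zero (by rw [hB]; rfl)
      have hmorph : ∀ Y, Y.bits 0 = 0 → morph Y 0 < B := by decide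
      refine ⟨1, fun j hj => ?_, ?_⟩
      · obtain rfl := Nat.lt_one_iff.mp hj
        change blockSeq (n + 2) (2 * b + 1) = blockSeq (n + 2) 0
        rw [blockSeq_succ_two_mul_add_one, hfirst, hB, blockSeq_succ_zero]
        rfl
      · change blockSeq (n + 2) (2 * (b + 1)) < blockSeq (n + 2) (2 * 0 + 1)
        rw [blockSeq_succ_two_mul, blockSeq_succ_two_mul_add_one, blockSeq_succ_zero]
        exact hmorph _ hnext
  · have hmorph : ∀ X Y, X ≠ B → Y.bits 0 = 1 → morph X 1 < morph Y 0 := by decide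
    refine ⟨0, fun j hj => absurd hj (Nat.not_lt_zero j), ?_⟩
    change blockSeq (n + 1) (2 * b + 1) < blockSeq (n + 1) 0
    rw [blockSeq_succ_two_mul_add_one, hfirst]
    exact hmorph _ _ hB (bits_blockSeq_zero n)

lemma isShiftMaximal_blockSeq (n : ℕ) : IsShiftMaximal (blockSeq n) := by
  induction n with
  | zero => exact fun _ => le_rfl
  | succ n ih =>
    intro a
    obtain ⟨b, rfl | rfl⟩ := Nat.even_or_odd' a
    · exact shift_substSeq_mul_le strictMono_morph ih b
    · exact (shift_blockSeq_succ_two_mul_add_one_lt n b).le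

def bitSeq (n : ℕ) : ℕ → ℕ :=
  substSeq bits (blockSeq n)

lemma bitSeq_mul_add (n i : ℕ) (j : Fin 3) : bitSeq n (3 * i + j) = (blockSeq n i).bits j :=
  substSeq_mul_add _ _ _ _

lemma bitSeq_zero (n : ℕ) : bitSeq n 0 = 1 :=
  (bitSeq_mul_add n 0 0).trans (bits_blockSeq_zero n)

lemma shift_bitSeq_three_mul_add_one_lt (n q : ℕ) :
    toLex (fun m => bitSeq n (3 * q + 1 + m)) < toLex (bitSeq n) := by
  refine ⟨0, fun j hj => absurd hj (Nat.not_lt_zero j), ?_⟩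
  change bitSeq n (3 * q + (1 : Fin 3)) < bitSeq n 0
  rw [bitSeq_mul_add, bitSeq_zero, bits_one]
  exact Nat.one_pos

lemma shift_bitSeq_three_mul_add_two_lt (n q : ℕ) :
    toLex (fun m => bitSeq n (3 * q + 2 + m)) < toLex (bitSeq n) := by
  by_cases hX : (blockSeq n q).bits 2 = 1
  · cases n with
    | zero => simp [blockSeq, bits] at hX
    | succ n =>
      have hnext := bits_blockSeq_add_one_zero_eq_zero hX
      have hA (j : Fin 3) : bitSeq (n + 1) j = A.bits j := by
        rw [← blockSeq_succ_zero n, ← bitSeq_mul_add, Nat.mul_zero, Nat.zero_add]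
      refine ⟨2, fun j hj => ?_, ?_⟩
      · obtain rfl | rfl : j = 0 ∨ j = 1 := by omega
        · change bitSeq (n + 1) (3 * q + (2 : Fin 3)) = bitSeq (n + 1) (0 : Fin 3)
          rw [bitSeq_mul_add, hA, hX]
          rfl
        · change bitSeq (n + 1) (3 * (q + 1) + (0 : Fin 3)) = bitSeq (n + 1) (1 : Fin 3)
          rw [bitSeq_mul_add, hA, hnext]
          rfl
      · change bitSeq (n + 1) (3 * (q + 1) + (1 : Fin 3)) < bitSeq (n + 1) (2 : Fin 3)
        rw [bitSeq_mul_add, hA, bits_one]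
        decide
  · refine ⟨0, fun j hj => absurd hj (Nat.not_lt_zero j), ?_⟩
    change bitSeq n (3 * q + (2 : Fin 3)) < bitSeq n 0
    have key : ∀ X : Block, X.bits 2 ≠ 1 → X.bits 2 = 0 := by decide
    rw [bitSeq_mul_add, bitSeq_zero, key _ hX]
    exact Nat.one_pos

lemma isShiftMaximal_bitSeq (n : ℕ) : IsShiftMaximal (bitSeq n) := by
  intro a
  obtain ⟨q, r, hr, rfl⟩ : ∃ q r, r < 3 ∧ a = 3 * q + r :=
    ⟨a / 3, a % 3, Nat.mod_lt a (by norm_num), (Nat.div_add_mod a 3).symm⟩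
  interval_cases r
  · exact shift_substSeq_mul_le strictMono_bits (isShiftMaximal_blockSeq n) q
  · exact (shift_bitSeq_three_mul_add_one_lt n q).le
  · exact (shift_bitSeq_three_mul_add_two_lt n q).le

def blockWord : ℕ → List Block
  | 0 => [D]
  | n + 1 => substWord morph (blockWord n)

lemma blockWord_eq_concat (n : ℕ) : ∃ l x, blockWord n = l ++ [x] ∧ x.bits 2 = 0 := by
  induction n with
  | zero => exact ⟨[], D, rfl, rfl⟩
  | succ n ih =>
    obtain ⟨l, x, hw, hx⟩ := ih
    have key : ∀ X : Block, X.bits 2 = 0 → (morph X 1).bits 2 = 0 := by decide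
    refine ⟨substWord morph l ++ [morph x 0], morph x 1, ?_, key x hx⟩
    simp [blockWord, hw, substWord, List.ofFn_succ]

lemma periodicSeq_blockWord (n : ℕ) (d : Block) : periodicSeq (blockWord n) d = blockSeq n := by
  induction n with
  | zero =>
    funext m
    simp [periodicSeq, blockWord, blockSeq, Nat.mod_one]
  | succ n ih =>
    obtain ⟨l, x, hw, -⟩ := blockWord_eq_concat n
    rw [blockWord, periodicSeq_substWord morph (by simp [hw]) d, ih]
    rfl

lemma blockWord_succ (n : ℕ) :
    blockWord (n + 1) =
      (blockWord n).modifyLast plus ++ ((blockWord n).modifyLast plus).map phi := by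
  have hplus : ∀ a, List.ofFn (morph (plus a)) = (List.ofFn (morph a)).modifyLast plus := by
    decide
  have hphi : ∀ a, morph (phi a) = phi ∘ morph a := by
    decide
  induction n with
  | zero => decide
  | succ n ih =>
    obtain ⟨l, x, hw, -⟩ := blockWord_eq_concat n
    have hsucc : blockWord (n + 1) = substWord morph (blockWord n) := rfl
    conv_lhs => rw [blockWord, ih]
    rw [substWord_append, substWord_map hphi, hsucc, hw, substWord_modifyLast_concat (hplus x)]

lemma plusWord_eq_modifyLast (l : List ℕ) : plusWord l = l.modifyLast (· + 1) := by
  obtain rfl | ⟨l, x, rfl⟩ := l.eq_nil_or_concat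
  · rfl
  rw [List.concat_eq_append, List.modifyLast_concat]
  induction l with
  | nil => rfl
  | cons a l ih =>
    cases l with
    | nil => rfl
    | cons b l => simpa [plusWord] using ih

lemma plusWord_substWord_letters (N : ℕ) (l : List Block) {x : Block} (hx : x.bits 2 = 0) :
    plusWord (substWord (letters N) (l ++ [x])) =
      substWord (letters N) ((l ++ [x]).modifyLast plus) := by
  have hlast : List.ofFn (letters N (plus x)) = (List.ofFn (letters N x)).modifyLast (· + 1) := by
    cases x <;> first | exact absurd hx (by decide) | rfl
  rw [plusWord_eq_modifyLast, substWord_modifyLast_concat hlast]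

lemma phi1_substWord_letters (N : ℕ) (l : List Block) :
    phi1 N (substWord (letters N) l) = substWord (letters N) (l.map phi) := by
  induction l with
  | nil => rfl
  | cons a l ih =>
    cases a <;> simpa [substWord, letters, bits, phi, phi1, flipLetter, List.ofFn_succ] using ih

lemma tword_eq_substWord (N n : ℕ) : tword N n = substWord (letters N) (blockWord n) := by
  induction n with
  | zero => rfl
  | succ n ih =>
    obtain ⟨l, x, hw, hx⟩ := blockWord_eq_concat n
    rw [tword, ih, hw, plusWord_substWord_letters N l hx, phi1_substWord_letters, ← hw,
      blockWord_succ, substWord_append]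

lemma periodicSeq_tword (N n : ℕ) : periodicSeq (tword N n) 0 = (N + ·) ∘ bitSeq n := by
  obtain ⟨l, x, hw, -⟩ := blockWord_eq_concat n
  rw [tword_eq_substWord, periodicSeq_substWord _ (by simp [hw]) D, periodicSeq_blockWord]
  rfl

/-- σ^i(t_n^∞) ≼ t_n^∞ for all i ≥ 0. -/
theorem shift_periodic_tword_le (N n : ℕ) :
    ∀ i : ℕ,
      seqLe (fun j => (tword N n).getD ((i + j) % (tword N n).length) 0)
            (fun j => (tword N n).getD (j % (tword N n).length) 0) := by
  intro i
  change seqLe (fun j => periodicSeq (tword N n) 0 (i + j)) (periodicSeq (tword N n) 0)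
  rw [seqLe_iff_toLex_le, periodicSeq_tword]
  exact (isShiftMaximal_bitSeq n).comp (strictMono_id.const_add N) i
end

section
/- Let N ≥ 0 and let β be the unique root in (N+1, N+2) of x³ = (N+1)(x² + x + 1). Then ∑_{k≥0} ( (N+1)/β^{3k+1} + (N+1)/β^{3k+2} + N/β^{3k+3} ) = 1, i.e., ((N+1)(N+1)N)^∞ is an expansion of 1 in base β. -/
theorem tsum_three_periodic_div_pow {β : ℝ} (hβ : 1 < β) (a b c : ℝ) :
    ∑' k : ℕ, (a / β ^ (3 * k + 1) + b / β ^ (3 * k + 2) + c / β ^ (3 * k + 3)) =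
      (a * β ^ 2 + b * β + c) / (β ^ 3 - 1) := by
  have hβ0 : β ≠ 0 := by positivity
  have hβ3 : 1 < β ^ 3 := one_lt_pow₀ hβ (by norm_num)
  have hblock : ∀ k : ℕ, a / β ^ (3 * k + 1) + b / β ^ (3 * k + 2) + c / β ^ (3 * k + 3) =
      (a / β + b / β ^ 2 + c / β ^ 3) * ((β ^ 3)⁻¹) ^ k := by
    intro k
    simp only [pow_add, pow_mul, inv_pow]
    field_simp
  rw [tsum_congr hblock, tsum_mul_left,
    tsum_geometric_of_lt_one (by positivity) (inv_lt_one_of_one_lt₀ hβ3)]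
  have hden : β ^ 3 - 1 ≠ 0 := by linarith
  field_simp

/-- ((N+1)(N+1)N)^∞ is an expansion of 1 in base β_G(3N+2). -/
theorem golden_expansion_3N2 (N : ℕ) (β : ℝ)
    (hβ : β ∈ Set.Ioo ((N : ℝ) + 1) ((N : ℝ) + 2))
    (hroot : β ^ 3 = ((N : ℝ) + 1) * (β ^ 2 + β + 1)) :
    ∑' k : ℕ, (((N : ℝ) + 1) / β ^ (3 * k + 1) +
        ((N : ℝ) + 1) / β ^ (3 * k + 2) + (N : ℝ) / β ^ (3 * k + 3)) = 1 := by
  have hβ1 : 1 < β := by linarith [hβ.1, (N.cast_nonneg : (0 : ℝ) ≤ N)]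
  have hden : β ^ 3 - 1 ≠ 0 := (sub_pos.2 (one_lt_pow₀ hβ1 three_ne_zero)).ne'
  rw [tsum_three_periodic_div_pow hβ1, div_eq_one_iff_eq hden]
  linear_combination -hroot
end

section
/- Define words a_n over the alphabet Ω_M (M = 3N+1) by a₀ = α_{(N+1)N} α_{N(N+1)} α_{NN} and a_{n+1} = a_n⁺ Φ₁(a_n⁺), where a_n⁺ changes the final letter α_{NN} to α_{(N+1)N}, and Φ₁ is the blockwise involution on length-3 blocks swapping α_{(N+1)N}α_{N(N+1)}α_{(N+1)N} ↔ α_{NN}α_{N(N+1)}α_{NN} and α_{(N+1)N}α_{N(N+1)}α_{NN} ↔ α_{NN}α_{N(N+1)}α_{(N+1)N}. Write a_n = a₁⋯a_{3·2ⁿ} with a_i = (a_i¹, a_i²) ∈ ℕ². Then the first-coordinate word a_n¹ = a₁¹⋯a_{3·2ⁿ}¹ equals t_n, the second-coordinate word equals (N(N+1)N)^{2ⁿ}, and the word (M − a_i¹ − a_i²)_{i=1}^{3·2ⁿ} equals φ₁(t_n), where t₀ = (N+1)NN, t_{n+1} = t_n⁺φ₁(t_n⁺), and φ₁ swaps (N+1)N(N+1)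 ↔ NNN, (N+1)NN ↔ NN(N+1) blockwise. -/
/-- Flip a pair-letter between α_{(N+1)N} = (N+1,N) and α_{NN} = (N,N). -/
def flipPair (N : ℕ) (p : ℕ × ℕ) : ℕ × ℕ :=
  if p = (N + 1, N) then (N, N) else (N + 1, N)

/-- The blockwise involution Φ₁ on words over Ω_M: it flips the first and third
letters of each length-3 block between (N+1,N) and (N,N) and keeps the middle
letter, realizing the swaps
α_{(N+1)N}α_{N(N+1)}α_{(N+1)N} ↔ α_{NN}α_{N(N+1)}α_{NN} and
α_{(N+1)N}α_{N(N+1)}α_{NN} ↔ α_{NN}α_{N(N+1)}α_{(N+1)N}. -/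
def PhiOne (N : ℕ) : List (ℕ × ℕ) → List (ℕ × ℕ)
  | a :: b :: c :: rest => flipPair N a :: b :: flipPair N c :: PhiOne N rest
  | l => l

/-- Replace the final letter α_{NN} of a word by α_{(N+1)N}. -/
def plusPairWord (N : ℕ) : List (ℕ × ℕ) → List (ℕ × ℕ)
  | [] => []
  | [_] => [(N + 1, N)]
  | a :: b :: rest => a :: plusPairWord N (b :: rest)

/-- The words a_n: a₀ = α_{(N+1)N}α_{N(N+1)}α_{NN}, a_{n+1} = a_n⁺ Φ₁(a_n⁺). -/
def aword (N : ℕ) : ℕ → List (ℕ × ℕ)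
  | 0 => [(N + 1, N), (N, N + 1), (N, N)]
  | n + 1 => plusPairWord N (aword N n) ++ PhiOne N (plusPairWord N (aword N n))

/-!
Pairing the letters of a word `t` with the periodic pattern `N, N+1, N` of second coordinates
turns `t_n` into `a_n`: the pairing intertwines `⁺` with `⁺` and `φ₁` with `Φ₁` as long as `t`
is made of blocks `x N y` with `x, y ∈ {N, N+1}` and ends in `N`, a shape preserved by the
recursion defining `t_n`. On such a block the third coordinate `M - x - N` of the outer letters
is the flipped letter and that of the middle letter is `N`, which gives `φ₁(t_n)`.
-/

@[simp] lemma plusWord_length (t : List ℕ) : (plusWord t).length = t.length := by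
  fun_induction plusWord t <;> simp_all

@[simp] lemma phi1_length (N : ℕ) (t : List ℕ) : (phi1 N t).length = t.length := by
  fun_induction phi1 N t <;> simp_all

lemma tword_length (N n : ℕ) : (tword N n).length = 3 * 2 ^ n := by
  induction n with
  | zero => rfl
  | succ n ih => simp only [tword, List.length_append, plusWord_length, phi1_length, ih]; ring

lemma plusWord_cons {t : List ℕ} (ht : t ≠ []) (a : ℕ) :
    plusWord (a :: t) = a :: plusWord t := by
  obtain ⟨b, rest, rfl⟩ := List.exists_cons_of_ne_nil ht
  rfl

lemma plusPairWord_cons (N : ℕ) {l : List (ℕ × ℕ)} (hl : l ≠ []) (p : ℕ × ℕ) :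
    plusPairWord N (p :: l) = p :: plusPairWord N l := by
  obtain ⟨q, rest, rfl⟩ := List.exists_cons_of_ne_nil hl
  rfl

lemma flipLetter_eq_or (N a : ℕ) : flipLetter N a = N ∨ flipLetter N a = N + 1 := by
  unfold flipLetter; split <;> simp

lemma flipPair_mk {N a : ℕ} (ha : a = N ∨ a = N + 1) :
    flipPair N (a, N) = (flipLetter N a, N) := by
  rcases ha with rfl | rfl <;> simp [flipPair, flipLetter]

lemma sub_sub_eq_flipLetter {N a : ℕ} (ha : a = N ∨ a = N + 1) :
    3 * N + 1 - a - N = flipLetter N a := by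
  rcases ha with rfl | rfl <;> simp [flipLetter] <;> omega

def pairify (N : ℕ) : List ℕ → List (ℕ × ℕ)
  | a :: b :: c :: rest => (a, N) :: (b, N + 1) :: (c, N) :: pairify N rest
  | _ => []

lemma length_lt_three_of_ne_cons {t : List ℕ}
    (ht : ∀ (a b c : ℕ) (rest : List ℕ), t = a :: b :: c :: rest → False) : t.length < 3 := by
  match t with
  | [] | [_] | [_, _] => simp
  | _ :: _ :: _ :: _ => exact absurd rfl (ht _ _ _ _)

lemma map_fst_pairify (N : ℕ) (t : List ℕ) (h : 3 ∣ t.length) :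
    (pairify N t).map Prod.fst = t := by
  fun_induction pairify N t with
  | case1 a b c rest ih => simp_all [Nat.dvd_add_self_right]
  | case2 t ht =>
    have : t.length = 0 := by have := length_lt_three_of_ne_cons ht; omega
    simp_all

lemma map_snd_pairify (N : ℕ) (t : List ℕ) :
    (pairify N t).map Prod.snd = (List.replicate (t.length / 3) [N, N + 1, N]).flatten := by
  fun_induction pairify N t with
  | case1 a b c rest ih =>
    rw [List.length_cons, List.length_cons, List.length_cons,
      show (rest.length + 1 + 1 + 1) / 3 = rest.length / 3 + 1 by omega]
    simp [ih, List.replicate_succ]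
  | case2 t ht =>
    rw [Nat.div_eq_of_lt (length_lt_three_of_ne_cons ht)]
    rfl

lemma pairify_append (N : ℕ) {s : List ℕ} (hs : 3 ∣ s.length) (t : List ℕ) :
    pairify N (s ++ t) = pairify N s ++ pairify N t := by
  fun_induction pairify N s with
  | case1 a b c rest ih => simp_all [pairify, Nat.dvd_add_self_right]
  | case2 s hs' =>
    have : s.length = 0 := by have := length_lt_three_of_ne_cons hs'; omega
    simp_all

/-- The index `e` is the last letter of the word. -/
inductive BlockWord (N : ℕ) : ℕ → List ℕ → Prop
  | single {a c : ℕ} (ha : a = N ∨ a = N + 1) (hc : c = N ∨ c = N + 1) :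
      BlockWord N c [a, N, c]
  | cons {a c e : ℕ} {rest : List ℕ} (ha : a = N ∨ a = N + 1) (hc : c = N ∨ c = N + 1)
      (h : BlockWord N e rest) : BlockWord N e (a :: N :: c :: rest)

namespace BlockWord

variable {N e : ℕ} {t : List ℕ}

lemma ne_nil (h : BlockWord N e t) : t ≠ [] := by
  cases h <;> simp

lemma pairify_ne_nil (h : BlockWord N e t) : pairify N t ≠ [] := by
  cases h <;> simp [pairify]

lemma three_dvd_length (h : BlockWord N e t) : 3 ∣ t.length := by
  induction h with
  | single => simp
  | cons _ _ _ ih => simpa [Nat.dvd_add_self_right] using ih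

lemma append {e' : ℕ} {s : List ℕ} (hs : BlockWord N e' s) (ht : BlockWord N e t) :
    BlockWord N e (s ++ t) := by
  induction hs with
  | single ha hc => exact cons ha hc ht
  | cons ha hc _ ih => exact cons ha hc ih

lemma phi1 (h : BlockWord N e t) : BlockWord N (flipLetter N e) (phi1 N t) := by
  induction h with
  | single => exact single (flipLetter_eq_or N _) (flipLetter_eq_or N _)
  | cons _ _ _ ih => exact cons (flipLetter_eq_or N _) (flipLetter_eq_or N _) ih

lemma plusWord (h : BlockWord N e t) (he : e = N) : BlockWord N (N + 1) (plusWord t) := by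
  induction h with
  | single ha => subst he; exact single ha (Or.inr rfl)
  | cons ha hc hrest ih =>
    rw [plusWord_cons (by simp), plusWord_cons (by simp), plusWord_cons hrest.ne_nil]
    exact cons ha hc (ih he)

lemma map_sub_pairify (h : BlockWord N e t) :
    (pairify N t).map (fun p => 3 * N + 1 - p.1 - p.2) = _root_.phi1 N t := by
  have hmid : 3 * N + 1 - N - (N + 1) = N := by omega
  induction h with
  | single ha hc =>
    simp [pairify, _root_.phi1, hmid, sub_sub_eq_flipLetter ha, sub_sub_eq_flipLetter hc]
  | cons ha hc _ ih =>
    simp [pairify, _root_.phi1, hmid, sub_sub_eq_flipLetter ha, sub_sub_eq_flipLetter hc, ih]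

lemma phiOne_pairify (h : BlockWord N e t) :
    PhiOne N (pairify N t) = pairify N (_root_.phi1 N t) := by
  induction h with
  | single ha hc => simp [pairify, PhiOne, _root_.phi1, flipPair_mk ha, flipPair_mk hc]
  | cons ha hc _ ih => simp [pairify, PhiOne, _root_.phi1, flipPair_mk ha, flipPair_mk hc, ih]

lemma plusPairWord_pairify (h : BlockWord N e t) (he : e = N) :
    plusPairWord N (pairify N t) = pairify N (_root_.plusWord t) := by
  induction h with
  | single => subst he; rfl
  | cons _ _ hrest ih =>
    rw [plusWord_cons (by simp), plusWord_cons (by simp), plusWord_cons hrest.ne_nil]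
    simp only [pairify]
    rw [plusPairWord_cons N (by simp), plusPairWord_cons N (by simp),
      plusPairWord_cons N hrest.pairify_ne_nil, ih he]

end BlockWord

lemma blockWord_tword (N n : ℕ) : BlockWord N N (tword N n) := by
  induction n with
  | zero => exact .single (Or.inr rfl) (Or.inl rfl)
  | succ n ih =>
    have hplus := ih.plusWord rfl
    simpa [tword, flipLetter] using hplus.append hplus.phi1

lemma aword_eq_pairify (N n : ℕ) : aword N n = pairify N (tword N n) := by
  induction n with
  | zero => rfl
  | succ n ih =>
    have hblock := blockWord_tword N n
    have hplus := hblock.plusWord rfl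
    rw [aword, tword, ih, hblock.plusPairWord_pairify rfl, hplus.phiOne_pairify,
      pairify_append N hplus.three_dvd_length]

/-- the three coordinate words of a_n are t_n, (N(N+1)N)^{2ⁿ}
and φ₁(t_n). -/
theorem aword_coordinates (N : ℕ) (M : ℕ) (hM : M = 3 * N + 1) (n : ℕ) :
    (aword N n).map Prod.fst = tword N n ∧
      (aword N n).map Prod.snd = List.flatten (List.replicate (2 ^ n) [N, N + 1, N]) ∧
      (aword N n).map (fun p => M - p.1 - p.2) = phi1 N (tword N n) := by
  subst hM
  have hblock := blockWord_tword N n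
  have hdvd : 3 ∣ (tword N n).length := tword_length N n ▸ dvd_mul_right 3 _
  rw [aword_eq_pairify]
  refine ⟨map_fst_pairify N _ hdvd, ?_, hblock.map_sub_pairify⟩
  rw [map_snd_pairify, tword_length, Nat.mul_div_cancel_left _ three_pos]
end

section
/- Let (τ_i) be the Thue–Morse sequence and N ≥ 0. Define (γ_i)_{i≥1} by γ_{3k+1} = τ_{2k+1}+N, γ_{3k+2} = N+1, γ_{3k+3} = τ_{2k+2}+N. Let φ₂ be the substitution 0 ↦ N(N+1)(N+1), 1 ↦ (N+1)N(N+1). Then (γ_i)_{i≥1} is the shift by one letter of the concatenation φ₂(τ₀)φ₂(τ₁)φ₂(τ₂)⋯; equivalently, setting γ₀ = N, one has γ_{3k} = τ_k+N, γ_{3k+1} = 1−τ_k+N, γ_{3k+2} = N+1 for all k ≥ 0. -/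
/-! Since τ is {0,1}-valued, φ₂(τ_k) is the block (τ_k + N, 1 − τ_k + N, N + 1), while the
recurrences τ_{2k+1} = 1 − τ_k and τ_{2k+2} = τ_{k+1} turn the defining formulas of γ into the
same block at positions 3k, 3k+1, 3k+2. -/

theorem le_one_of_thueMorse_rec {τ : ℕ → ℕ} (h0 : τ 0 ≤ 1) (he : ∀ i, τ (2 * i) = τ i)
    (ho : ∀ i, τ (2 * i + 1) = 1 - τ i) : ∀ k, τ k ≤ 1
  | 0 => h0
  | k + 1 => by
    obtain ⟨i, hi | hi⟩ := Nat.even_or_odd' (k + 1)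
    · have : i < k + 1 := by omega
      rw [hi, he]
      exact le_one_of_thueMorse_rec h0 he ho i
    · rw [hi, ho]
      exact Nat.sub_le 1 _

theorem eq_of_forall_mod_three {α : Type*} {f g : ℕ → α}
    (h : ∀ k, f (3 * k) = g (3 * k) ∧ f (3 * k + 1) = g (3 * k + 1) ∧
      f (3 * k + 2) = g (3 * k + 2)) (i : ℕ) : f i = g i := by
  obtain ⟨k, r, hr, rfl⟩ : ∃ k r, r < 3 ∧ i = 3 * k + r :=
    ⟨i / 3, i % 3, Nat.mod_lt _ (by norm_num), (Nat.div_add_mod i 3).symm⟩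
  interval_cases r
  exacts [(h k).1, (h k).2.1, (h k).2.2]

theorem eq_of_triple_eq_image_binary {N t a b c : ℕ} {φ : ℕ → List ℕ}
    (hφ0 : φ 0 = [N, N + 1, N + 1]) (hφ1 : φ 1 = [N + 1, N, N + 1]) (ht : t ≤ 1)
    (h : [a, b, c] = φ t) : a = t + N ∧ b = 1 - t + N ∧ c = N + 1 := by
  obtain rfl | rfl := Nat.le_one_iff_eq_zero_or_eq_one.mp ht
  · simp only [hφ0, List.cons.injEq, and_true] at h
    omega
  · simp only [hφ1, List.cons.injEq, and_true] at h
    omega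

/-- (γ_i)_{i≥1} is the shift by one of φ₂(τ₀)φ₂(τ₁)⋯; equivalently,
with γ₀ = N one has γ_{3k} = τ_k+N, γ_{3k+1} = 1−τ_k+N, γ_{3k+2} = N+1. -/
theorem gamma_eq_shift_substitution (N : ℕ) (τ : ℕ → ℕ)
    (hτ0 : τ 0 = 0) (hτe : ∀ i, τ (2 * i) = τ i) (hτo : ∀ i, τ (2 * i + 1) = 1 - τ i)
    (γ : ℕ → ℕ) (hγ0 : γ 0 = N)
    (h1 : ∀ k, γ (3 * k + 1) = τ (2 * k + 1) + N)
    (h2 : ∀ k, γ (3 * k + 2) = N + 1)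
    (h3 : ∀ k, γ (3 * k + 3) = τ (2 * k + 2) + N)
    (φ2 : ℕ → List ℕ)
    (hφ0 : φ2 0 = [N, N + 1, N + 1]) (hφ1 : φ2 1 = [N + 1, N, N + 1])
    (c : ℕ → ℕ)
    (hc : ∀ k, [c (3 * k), c (3 * k + 1), c (3 * k + 2)] = φ2 (τ k)) :
    (∀ i, 1 ≤ i → γ i = c i) ∧
      (∀ k, γ (3 * k) = τ k + N ∧ γ (3 * k + 1) = 1 - τ k + N ∧
        γ (3 * k + 2) = N + 1) := by
  have hτ_le : ∀ k, τ k ≤ 1 := le_one_of_thueMorse_rec (hτ0.trans_le zero_le_one) hτe hτo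
  have hγ : ∀ k, γ (3 * k) = τ k + N ∧ γ (3 * k + 1) = 1 - τ k + N ∧
      γ (3 * k + 2) = N + 1 := by
    refine fun k => ⟨?_, by rw [h1, hτo], h2 k⟩
    cases k with
    | zero => rw [hγ0, hτ0, zero_add]
    | succ k => rw [← hτe, mul_add_one, mul_add_one, h3]
  have hc' := fun k => eq_of_triple_eq_image_binary hφ0 hφ1 (hτ_le k) (hc k)
  refine ⟨fun i _ => eq_of_forall_mod_three (fun k => ?_) i, hγ⟩
  obtain ⟨hγa, hγb, hγc⟩ := hγ k
  obtain ⟨hca, hcb, hcc⟩ := hc' k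
  exact ⟨hγa.trans hca.symm, hγb.trans hcb.symm, hγc.trans hcc.symm⟩
end
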